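/- arXiv:1810.01704 — 4 statements merged into one kernel-verified Lean document; each statement's English description precedes it below -/
import Mathlib

section
/- If H is a nontrivial Heyting algebra having the Density and Splitting properties, then every finite nontrivial Heyting algebra B admits an injective Heyting-algebra homomorphism into H. -/
/-!
Induction on `|B|`, embedding `B` into an interval `[D, U]` of `H` with `U ≫ D`. If `⊤` is
join-reducible in `B`, say `x ⊔ y = ⊤`, then `B` embeds into `↓x × ↓y` (quotients by the
principal filters of `x` and `y`), and Splitting cuts `[D, U]` into `[a₁, U]` and `[a₂, U]` with
`a₁ ⊓ a₂ = D`, `a₁ ⊔ a₂ = U`, into which the two factors embed by induction. Otherwise `B` is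
`↓m` with a new top adjoined; Density provides `U ≫ b ≫ D`, `↓m` embeds into `[D, b]` by
induction, and the new top goes to `U`.
-/

/-- `StrongOrd b a` means `b ≫ a`, i.e. `b ⇨ a = a` and `a ≤ b`. -/
def StrongOrd {H : Type*} [HeytingAlgebra H] (b a : H) : Prop := b ⇨ a = a ∧ a ≤ b

/-- The Density property. -/
def HasDensity (H : Type*) [HeytingAlgebra H] : Prop :=
  ∀ a c : H, StrongOrd c a → a ≠ ⊤ → ∃ b : H, b ≠ ⊤ ∧ StrongOrd c b ∧ StrongOrd b a

/-- The Splitting property. -/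
def HasSplitting (H : Type*) [HeytingAlgebra H] : Prop :=
  ∀ a b₁ b₂ : H, StrongOrd (b₁ ⊓ b₂) a → a ≠ ⊤ →
    ∃ a₁ a₂ : H, a₁ ≠ ⊤ ∧ a₂ ≠ ⊤ ∧ a₂ ⇨ a = a₁ ∧ a₁ ⇨ a = a₂ ∧
      a₁ ≤ b₁ ∧ a₂ ≤ b₂ ∧ a₁ ⊔ a₂ = b₁ ⊔ b₂

namespace Set.Iic

variable {α : Type*}

instance [DistribLattice α] {a : α} : DistribLattice (Iic a) :=
  Subtype.coe_injective.distribLattice _ Iff.rfl Iff.rfl (fun _ _ => rfl) (fun _ _ => rfl)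

variable [HeytingAlgebra α] {a : α}

instance : HeytingAlgebra (Iic a) :=
  HeytingAlgebra.ofHImp (fun x y => ⟨(x ⇨ y) ⊓ a, inf_le_right⟩) fun x y z => by
    change (x : α) ≤ ((y : α) ⇨ z) ⊓ a ↔ (x : α) ⊓ y ≤ z
    rw [le_inf_iff, le_himp_iff]
    exact and_iff_left x.2

end Set.Iic

namespace HeytingHom

variable {α β γ : Type*} [HeytingAlgebra α] [HeytingAlgebra β] [HeytingAlgebra γ]

/-- The quotient of `α` by the principal filter of `a`, realised as `c ↦ c ⊓ a`. -/
def toIic (a : α) : HeytingHom α (Set.Iic a) where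
  toFun c := ⟨c ⊓ a, inf_le_right⟩
  map_sup' _ _ := Subtype.ext (inf_sup_right _ _ _)
  map_inf' _ _ := Subtype.ext (inf_inf_distrib_right _ _ _)
  map_bot' := Subtype.ext (bot_inf_eq a)
  map_himp' b c := Subtype.ext <| by
    change (b ⇨ c) ⊓ a = (b ⊓ a ⇨ c ⊓ a) ⊓ a
    rw [inf_comm b a, ← himp_himp, himp_inf_self, himp_inf_distrib, inf_assoc,
      inf_eq_right.2 le_himp]

def prod (f : HeytingHom α β) (g : HeytingHom α γ) : HeytingHom α (β × γ) where
  toFun a := (f a, g a)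
  map_sup' a b := Prod.ext (map_sup f a b) (map_sup g a b)
  map_inf' a b := Prod.ext (map_inf f a b) (map_inf g a b)
  map_bot' := Prod.ext (map_bot f) (map_bot g)
  map_himp' a b := Prod.ext (map_himp f a b) (map_himp g a b)

lemma injective_prod_toIic {x y : α} (h : x ⊔ y = ⊤) :
    Function.Injective ((toIic x).prod (toIic y)) := fun c d hcd => by
  have hx : c ⊓ x = d ⊓ x := congrArg (fun p => (p.1 : α)) hcd
  have hy : c ⊓ y = d ⊓ y := congrArg (fun p => (p.2 : α)) hcd
  rw [← inf_top_eq c, ← inf_top_eq d, ← h, inf_sup_left, inf_sup_left, hx, hy]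

end HeytingHom

section Lattice

variable {α : Type*}

lemma exists_forall_le_of_sup_ne_top [Lattice α] [BoundedOrder α] [Finite α]
    (hα : (⊥ : α) ≠ ⊤) (h : ∀ x y : α, x ≠ ⊤ → y ≠ ⊤ → x ⊔ y ≠ ⊤) :
    ∃ m : α, m ≠ ⊤ ∧ ∀ c, c ≠ ⊤ → c ≤ m := by
  obtain ⟨m, hm⟩ := (Set.toFinite {x : α | x ≠ ⊤}).exists_maximal ⟨⊥, hα⟩
  exact ⟨m, hm.prop, fun c hc =>
    le_sup_left.trans (hm.eq_of_le (h c m hc hm.prop) le_sup_right).ge⟩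

lemma inf_sup_eq_of_le_sup [DistribLattice α] {a b c : α} (hca : c ≤ a) (ha : a ≤ c ⊔ b) :
    a ⊓ b ⊔ c = a := by
  rw [sup_inf_right, sup_eq_left.2 hca, inf_eq_left, sup_comm]
  exact ha

lemma inf_himp_eq_himp_of_le_sup [HeytingAlgebra α] {a b c : α} (h : a ≤ c ⊔ b) :
    a ⊓ b ⇨ c = a ⇨ c := by
  refine le_antisymm ?_ (himp_le_himp_right inf_le_left)
  rw [← himp_himp, le_himp_iff, inf_comm, inf_himp]
  calc a ⊓ (b ⇨ c) ≤ (c ⊔ b) ⊓ (b ⇨ c) := inf_le_inf_right _ h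
    _ = c ⊓ (b ⇨ c) ⊔ b ⊓ c := by rw [inf_sup_right, inf_himp]
    _ ≤ c := sup_le inf_le_left inf_le_right

end Lattice

namespace StrongOrd

variable {H : Type*} [HeytingAlgebra H] {U b z : H}

lemma himp_eq_of_le (h : StrongOrd U b) (hz : z ≤ b) : U ⇨ z = z := by
  refine le_antisymm ?_ le_himp
  have hb : U ⇨ z ≤ b := h.1 ▸ himp_le_himp_left hz
  calc U ⇨ z = (U ⇨ z) ⊓ U := (inf_eq_left.2 (hb.trans h.2)).symm
    _ ≤ z := by rw [himp_inf_self]; exact inf_le_left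

lemma not_le (h : StrongOrd U b) (hb : b ≠ ⊤) : ¬U ≤ b := fun hUb =>
  hb (h.1 ▸ himp_eq_top_iff.2 hUb)

end StrongOrd

lemma HasSplitting.exists_sup_eq_inf_eq {H : Type*} [HeytingAlgebra H] (hs : HasSplitting H)
    {U D : H} (hUD : StrongOrd U D) (hD : D ≠ ⊤) :
    ∃ a₁ a₂ : H, a₁ ≠ ⊤ ∧ a₂ ≠ ⊤ ∧ StrongOrd U a₁ ∧ StrongOrd U a₂ ∧
      a₁ ⊔ a₂ = U ∧ a₁ ⊓ a₂ = D := by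
  obtain ⟨a₁, a₂, ha₁, ha₂, h₂₁, h₁₂, ha₁U, ha₂U, hsup⟩ :=
    hs D U U (by rwa [inf_idem]) hD
  refine ⟨a₁, a₂, ha₁, ha₂, ⟨by rw [← h₂₁, himp_left_comm, hUD.1], ha₁U⟩,
    ⟨by rw [← h₁₂, himp_left_comm, hUD.1], ha₂U⟩, by rwa [sup_idem] at hsup, ?_⟩
  rw [← h₂₁, himp_inf_self]
  exact inf_eq_left.2 (h₁₂ ▸ le_himp)

section Realization

variable {C C' H : Type*} [HeytingAlgebra C] [HeytingAlgebra C'] [HeytingAlgebra H]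

/-- An embedding of `C` as a sublattice of the interval `[D, U]` of `H`. Implications are
only preserved for `a ≰ b`: for `a ≤ b` the two sides are `U` and `⊤`. -/
structure IsRealization (U D : H) (f : C → H) : Prop where
  map_top : f ⊤ = U
  map_bot : f ⊥ = D
  map_inf : ∀ a b, f (a ⊓ b) = f a ⊓ f b
  map_sup : ∀ a b, f (a ⊔ b) = f a ⊔ f b
  map_himp_of_not_le : ∀ a b, ¬a ≤ b → f (a ⇨ b) = f a ⇨ f b
  injective : Function.Injective f

namespace IsRealization

variable {U D : H} {f : C → H}

lemma monotone (hf : IsRealization U D f) : Monotone f := fun a b h => by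
  rw [← inf_eq_left.2 h, hf.map_inf]
  exact inf_le_right

lemma apply_le (hf : IsRealization U D f) (c : C) : f c ≤ U :=
  hf.map_top ▸ hf.monotone le_top

lemma le_apply (hf : IsRealization U D f) (c : C) : D ≤ f c :=
  hf.map_bot ▸ hf.monotone bot_le

lemma himp_le_of_not_le (hf : IsRealization U D f) {a b : C} (hab : ¬a ≤ b) :
    f a ⇨ f b ≤ U :=
  hf.map_himp_of_not_le a b hab ▸ hf.apply_le _

lemma map_himp (hf : IsRealization U D f) (a b : C) : f (a ⇨ b) = (f a ⇨ f b) ⊓ U := by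
  by_cases hab : a ≤ b
  · rw [himp_eq_top_iff.2 hab, himp_eq_top_iff.2 (hf.monotone hab), top_inf_eq, hf.map_top]
  · rw [inf_eq_left.2 (hf.himp_le_of_not_le hab), hf.map_himp_of_not_le a b hab]

lemma const [Subsingleton C] (D : H) : IsRealization D D fun _ : C => D where
  map_top := rfl
  map_bot := rfl
  map_inf _ _ := inf_idem _ |>.symm
  map_sup _ _ := sup_idem _ |>.symm
  map_himp_of_not_le a b hab := absurd (Subsingleton.elim a b).le hab
  injective a b _ := Subsingleton.elim a b

lemma comp (hf : IsRealization U D f) (φ : HeytingHom C' C) (hφ : Function.Injective φ) :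
    IsRealization U D (f ∘ φ) where
  map_top := by simp [hf.map_top]
  map_bot := by simp [hf.map_bot]
  map_inf a b := by simp [hf.map_inf]
  map_sup a b := by simp [hf.map_sup]
  map_himp_of_not_le a b hab := by
    have hφab : ¬φ a ≤ φ b := fun h =>
      hab (inf_eq_left.1 (hφ (by rw [InfHomClass.map_inf, inf_eq_left.2 h])))
    exact (congrArg f (HeytingHomClass.map_himp φ a b)).trans (hf.map_himp_of_not_le _ _ hφab)
  injective := hf.injective.comp hφ

/-- Gluing along `U = a₁ ⊔ a₂`; each factor is recovered from the glued map by `⊔ aᵢ`. -/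
lemma prod {f₁ : C → H} {f₂ : C' → H} {a₁ a₂ : H} (hf₁ : IsRealization U a₁ f₁)
    (hf₂ : IsRealization U a₂ f₂) (hU : a₁ ⊔ a₂ = U) :
    IsRealization U (a₁ ⊓ a₂) fun p : C × C' => f₁ p.1 ⊓ f₂ p.2 := by
  have hU₁ (c' : C') : U ≤ a₁ ⊔ f₂ c' := hU ▸ sup_le_sup_left (hf₂.le_apply c') a₁
  have hU₂ (c : C) : U ≤ f₁ c ⊔ a₂ := hU ▸ sup_le_sup_right (hf₁.le_apply c) a₂
  have sup_fst (c : C) (c' : C') : f₁ c ⊓ f₂ c' ⊔ a₁ = f₁ c :=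
    inf_sup_eq_of_le_sup (hf₁.le_apply c) ((hf₁.apply_le c).trans (hU₁ c'))
  have sup_snd (c : C) (c' : C') : f₁ c ⊓ f₂ c' ⊔ a₂ = f₂ c' := by
    rw [inf_comm]
    exact inf_sup_eq_of_le_sup (hf₂.le_apply c')
      ((hf₂.apply_le c').trans ((hU₂ c).trans_eq (sup_comm _ _)))
  have inf_himp_fst (c₁ d₁ : C) (c₂ : C') : f₁ c₁ ⊓ f₂ c₂ ⇨ f₁ d₁ = f₁ c₁ ⇨ f₁ d₁ :=
    inf_himp_eq_himp_of_le_sup <| (hf₁.apply_le c₁).trans <|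
      (hU₁ c₂).trans (sup_le_sup_right (hf₁.le_apply d₁) _)
  have inf_himp_snd (c₁ : C) (c₂ d₂ : C') : f₁ c₁ ⊓ f₂ c₂ ⇨ f₂ d₂ = f₂ c₂ ⇨ f₂ d₂ := by
    rw [inf_comm]
    exact inf_himp_eq_himp_of_le_sup <| (hf₂.apply_le c₂).trans <|
      (hU₂ c₁).trans ((sup_le_sup_left (hf₂.le_apply d₂) _).trans_eq (sup_comm _ _))
  refine ⟨by simp [hf₁.map_top, hf₂.map_top], by simp [hf₁.map_bot, hf₂.map_bot],
    fun p q => by simp [hf₁.map_inf, hf₂.map_inf, inf_inf_inf_comm], fun p q => ?_,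
    fun p q hpq => ?_, fun p q hpq => ?_⟩
  · have hD : a₁ ⊓ a₂ ≤ f₁ p.1 ⊓ f₂ p.2 := inf_le_inf (hf₁.le_apply _) (hf₂.le_apply _)
    calc f₁ (p ⊔ q).1 ⊓ f₂ (p ⊔ q).2
        = (f₁ p.1 ⊔ f₁ q.1) ⊓ (f₂ p.2 ⊔ f₂ q.2) := by
          rw [← hf₁.map_sup, ← hf₂.map_sup]; rfl
      _ = (f₁ p.1 ⊓ f₂ p.2 ⊔ f₁ q.1 ⊓ f₂ q.2 ⊔ a₁) ⊓
            (f₁ p.1 ⊓ f₂ p.2 ⊔ f₁ q.1 ⊓ f₂ q.2 ⊔ a₂) := by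
        rw [sup_sup_distrib_right _ _ a₁, sup_sup_distrib_right _ _ a₂, sup_fst, sup_fst,
          sup_snd, sup_snd]
      _ = f₁ p.1 ⊓ f₂ p.2 ⊔ f₁ q.1 ⊓ f₂ q.2 := by
        rw [← sup_inf_left, sup_eq_left.2 (hD.trans le_sup_left)]
  · have hle : f₁ p.1 ⇨ f₁ q.1 ≤ U ∨ f₂ p.2 ⇨ f₂ q.2 ≤ U := by
      rw [Prod.le_def, not_and_or] at hpq
      exact hpq.imp hf₁.himp_le_of_not_le hf₂.himp_le_of_not_le
    change f₁ (p.1 ⇨ q.1) ⊓ f₂ (p.2 ⇨ q.2) = _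
    rw [hf₁.map_himp, hf₂.map_himp, inf_inf_inf_comm, inf_idem, himp_inf_distrib,
      inf_himp_fst, inf_himp_snd, inf_eq_left]
    exact hle.elim (inf_le_left.trans ·) (inf_le_right.trans ·)
  · have h₁ : f₁ p.1 = f₁ q.1 := by rw [← sup_fst p.1 p.2, hpq, sup_fst]
    have h₂ : f₂ p.2 = f₂ q.2 := by rw [← sup_snd p.1 p.2, hpq, sup_snd]
    exact Prod.ext (hf₁.injective h₁) (hf₂.injective h₂)

lemma extend_top [DecidableEq C] {m : C} (hm : m ≠ ⊤) (hle : ∀ c, c ≠ ⊤ → c ≤ m) {b : H}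
    {f : Set.Iic m → H} (hf : IsRealization b D f) (hUb : StrongOrd U b) (hb : b ≠ ⊤) :
    IsRealization U D fun c => if c = ⊤ then U else f (HeytingHom.toIic m c) := by
  set π := HeytingHom.toIic m
  have hπ (c : C) (hc : c ≠ ⊤) : (π c : C) = c := inf_eq_left.2 (hle c hc)
  have hfU (c : Set.Iic m) : f c ≤ U := (hf.apply_le c).trans hUb.2
  have hbot : (⊥ : C) ≠ ⊤ := fun h => hm (top_le_iff.1 (h ▸ bot_le))
  refine ⟨by simp, by simp [hbot, hf.map_bot], fun c d => ?_, fun c d => ?_, fun c d hcd => ?_,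
    fun c d hcd => ?_⟩
  · by_cases hc : c = ⊤ <;> by_cases hd : d = ⊤
    all_goals simp [hc, hd, hfU, hf.map_inf, InfHomClass.map_inf]
  · have hcd : c ≠ ⊤ → d ≠ ⊤ → c ⊔ d ≠ ⊤ := fun hc hd h =>
      hm (top_le_iff.1 (h ▸ sup_le (hle c hc) (hle d hd)))
    by_cases hc : c = ⊤ <;> by_cases hd : d = ⊤
    all_goals simp [hc, hd, hfU, hf.map_sup, SupHomClass.map_sup, hcd]
  · have hd : d ≠ ⊤ := fun h => hcd (h ▸ le_top)
    by_cases hc : c = ⊤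
    · simp [hc, hd, hUb.himp_eq_of_le (hf.apply_le _)]
    · have hπcd : ¬π c ≤ π d := fun h =>
        hcd (by simpa [hπ c hc, hπ d hd] using Subtype.coe_le_coe.2 h)
      simp [hc, hd, himp_eq_top_iff.not.2 hcd, HeytingHomClass.map_himp,
        hf.map_himp_of_not_le _ _ hπcd]
  · have hU (c : C) : f (π c) ≠ U := fun h => hUb.not_le hb (h ▸ hf.apply_le _)
    by_cases hc : c = ⊤ <;> by_cases hd : d = ⊤
    · exact hc.trans hd.symm
    · rw [if_pos hc, if_neg hd] at hcd
      exact absurd hcd.symm (hU d)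
    · rw [if_neg hc, if_pos hd] at hcd
      exact absurd hcd (hU c)
    · rw [if_neg hc, if_neg hd] at hcd
      rw [← hπ c hc, ← hπ d hd, hf.injective hcd]

def toHeytingHom (hf : IsRealization (⊤ : H) ⊥ f) : HeytingHom C H where
  toFun := f
  map_sup' := hf.map_sup
  map_inf' := hf.map_inf
  map_bot' := hf.map_bot
  map_himp' a b := by rw [hf.map_himp, inf_top_eq]

end IsRealization

end Realization

theorem exists_isRealization {H : Type*} [HeytingAlgebra H] (hd : HasDensity H)
    (hs : HasSplitting H) (C : Type*) [HeytingAlgebra C] [Finite C] (hC : (⊥ : C) ≠ ⊤)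
    {U D : H} (hUD : StrongOrd U D) (hD : D ≠ ⊤) : ∃ f : C → H, IsRealization U D f := by
  induction hn : Nat.card C using Nat.strong_induction_on generalizing C U D with
  | _ n ih =>
  classical
  have card_lt {m : C} (hm : m ≠ ⊤) : Nat.card (Set.Iic m) < n :=
    hn ▸ Finite.card_subtype_lt (x := ⊤) fun h => hm (top_le_iff.1 h)
  have Iic_nontrivial {m : C} (hm : m ≠ ⊥) : (⊥ : Set.Iic m) ≠ ⊤ :=
    fun h => hm (congrArg Subtype.val h).symm
  by_cases hred : ∃ x y : C, x ≠ ⊤ ∧ y ≠ ⊤ ∧ x ⊔ y = ⊤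
  · obtain ⟨x, y, hx, hy, hxy⟩ := hred
    obtain ⟨a₁, a₂, ha₁, ha₂, hUa₁, hUa₂, hsup, hinf⟩ := hs.exists_sup_eq_inf_eq hUD hD
    obtain ⟨f₁, hf₁⟩ := ih _ (card_lt hx) (Set.Iic x)
      (Iic_nontrivial fun h => hy (by simpa [h] using hxy)) hUa₁ ha₁ rfl
    obtain ⟨f₂, hf₂⟩ := ih _ (card_lt hy) (Set.Iic y)
      (Iic_nontrivial fun h => hx (by simpa [h] using hxy)) hUa₂ ha₂ rfl
    exact ⟨_, hinf ▸ (hf₁.prod hf₂ hsup).comp _ (HeytingHom.injective_prod_toIic hxy)⟩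
  · push Not at hred
    obtain ⟨m, hm, hle⟩ := exists_forall_le_of_sup_ne_top hC hred
    rcases eq_or_ne m ⊥ with rfl | hm₀
    -- `C = {⊥, ⊤}`: the trivial algebra `↓⊥` is realized at the single point `D`.
    · have : Subsingleton (Set.Iic (⊥ : C)) :=
        ⟨fun p q => Subtype.ext ((le_bot_iff.1 p.2).trans (le_bot_iff.1 q.2).symm)⟩
      exact ⟨_, (IsRealization.const D).extend_top hm hle hUD hD⟩
    · obtain ⟨b, hb, hUb, hbD⟩ := hd D U hUD hD
      obtain ⟨f, hf⟩ := ih _ (card_lt hm) (Set.Iic m) (Iic_nontrivial hm₀) hbD hD rfl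
      exact ⟨_, hf.extend_top hm hle hUb hb⟩

/-- Every finite nontrivial Heyting algebra embeds into any nontrivial Heyting algebra
having the Density and Splitting properties. -/
theorem finite_embeds_of_density_splitting (H : Type*) [HeytingAlgebra H]
    (hH : (⊥ : H) ≠ ⊤) (hd : HasDensity H) (hs : HasSplitting H)
    (B : Type*) [HeytingAlgebra B] [Finite B] (hB : (⊥ : B) ≠ ⊤) :
    ∃ k : HeytingHom B H, Function.Injective k := by
  obtain ⟨f, hf⟩ := exists_isRealization hd hs B hB ⟨top_himp, bot_le⟩ hH
  exact ⟨hf.toHeytingHom, hf.injective⟩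
end

section
/- A countable, locally finite Heyting algebra H is existentially closed if and only if the following holds: for every finite subalgebra A of H (with the induced Heyting-algebra structure), every finite Heyting algebra B and every injective Heyting-algebra homomorphism j : A → B, there exists an injective Heyting-algebra homomorphism k : B → H such that k(j(a)) = a for all a ∈ A. -/
/-- Formal Heyting terms in `n` variables. -/
inductive HeytingTerm (n : ℕ) : Type
  | var : Fin n → HeytingTerm n
  | bot : HeytingTerm n
  | top : HeytingTerm n
  | inf : HeytingTerm n → HeytingTerm n → HeytingTerm n
  | sup : HeytingTerm n → HeytingTerm n → HeytingTerm n
  | himp : HeytingTerm n → HeytingTerm n → HeytingTerm n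

namespace HeytingTerm

/-- Evaluation of a Heyting term in a Heyting algebra. -/
def eval {n : ℕ} {H : Type*} [HeytingAlgebra H] (v : Fin n → H) : HeytingTerm n → H
  | var i => v i
  | bot => ⊥
  | top => ⊤
  | inf a b => a.eval v ⊓ b.eval v
  | sup a b => a.eval v ⊔ b.eval v
  | himp a b => a.eval v ⇨ b.eval v

/-- The degree of a Heyting term: the maximal number of nested occurrences of `⇨`. -/
def degree {n : ℕ} : HeytingTerm n → ℕ
  | var _ => 0
  | bot => 0
  | top => 0
  | inf a b => max a.degree b.degree
  | sup a b => max a.degree b.degree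
  | himp a b => max a.degree b.degree + 1

end HeytingTerm

/-- `b` is a solution of the system `(t, s₁, …, s_κ)` with parameters `a`. -/
def IsSolution {l m κ : ℕ} {H : Type*} [HeytingAlgebra H]
    (t : HeytingTerm (l + m)) (s : Fin κ → HeytingTerm (l + m))
    (a : Fin l → H) (b : Fin m → H) : Prop :=
  t.eval (Fin.append a b) = ⊤ ∧ ∀ k, (s k).eval (Fin.append a b) ≠ ⊤

/-- The system `(t, s₁, …, s_κ)` with parameters `a` has a solution in `H`. -/
def HasSolution {l m κ : ℕ} {H : Type*} [HeytingAlgebra H]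
    (t : HeytingTerm (l + m)) (s : Fin κ → HeytingTerm (l + m)) (a : Fin l → H) : Prop :=
  ∃ b : Fin m → H, IsSolution t s a b

/-- A Heyting algebra is existentially closed if every system with parameters in `H`
having a solution in an extension of `H` already has a solution in `H`. -/
def IsExtClosed (H : Type*) [HeytingAlgebra H] : Prop :=
  ∀ (K : Type*) [HeytingAlgebra K] (f : HeytingHom H K), Function.Injective f →
    ∀ {l m κ : ℕ} (t : HeytingTerm (l + m)) (s : Fin κ → HeytingTerm (l + m)) (a : Fin l → H),
      HasSolution t s (fun i => f (a i)) → HasSolution t s a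

/-- A Heyting subalgebra: a subset containing `⊥`, `⊤` and closed under `⊓`, `⊔`, `⇨`. -/
structure HeytingSubalgebra (H : Type*) [HeytingAlgebra H] where
  carrier : Set H
  bot_mem : ⊥ ∈ carrier
  top_mem : ⊤ ∈ carrier
  inf_mem : ∀ {a b : H}, a ∈ carrier → b ∈ carrier → a ⊓ b ∈ carrier
  sup_mem : ∀ {a b : H}, a ∈ carrier → b ∈ carrier → a ⊔ b ∈ carrier
  himp_mem : ∀ {a b : H}, a ∈ carrier → b ∈ carrier → a ⇨ b ∈ carrier

/-- A Heyting algebra is locally finite if every finite subset is contained in a finite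
subalgebra. -/
def LocallyFiniteHA (H : Type*) [HeytingAlgebra H] : Prop :=
  ∀ s : Finset H, ∃ S : HeytingSubalgebra H, S.carrier.Finite ∧ ↑s ⊆ S.carrier

namespace HeytingSubalgebra

variable {H : Type*} [HeytingAlgebra H]

instance (S : HeytingSubalgebra H) : Max S.carrier := ⟨fun a b => ⟨a ⊔ b, S.sup_mem a.2 b.2⟩⟩
instance (S : HeytingSubalgebra H) : Min S.carrier := ⟨fun a b => ⟨a ⊓ b, S.inf_mem a.2 b.2⟩⟩
instance (S : HeytingSubalgebra H) : Top S.carrier := ⟨⟨⊤, S.top_mem⟩⟩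
instance (S : HeytingSubalgebra H) : Bot S.carrier := ⟨⟨⊥, S.bot_mem⟩⟩
instance (S : HeytingSubalgebra H) : HImp S.carrier :=
  ⟨fun a b => ⟨a.1 ⇨ b.1, S.himp_mem a.2 b.2⟩⟩
instance (S : HeytingSubalgebra H) : Compl S.carrier :=
  ⟨fun a => ⟨a.1 ⇨ ⊥, S.himp_mem a.2 S.bot_mem⟩⟩

/-- The induced Heyting algebra structure on a subalgebra. -/
instance (S : HeytingSubalgebra H) : HeytingAlgebra S.carrier :=
  Function.Injective.heytingAlgebra Subtype.val Subtype.coe_injective Iff.rfl Iff.rfl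
    (fun _ _ => rfl) (fun _ _ => rfl) rfl rfl (fun a => himp_bot a.1) (fun _ _ => rfl)

end HeytingSubalgebra

/-!
(⇒) Let `j : S ↪ B` be a finite extension of a finite subalgebra `S ≤ H`. Duality gives an
amalgam of `H` and `B` over `S`: the lower sets of the poset of pairs `(P, Q)` of prime ideals of
`H` and `B` with the same trace on `S`. Both projections are surjective p-morphisms (prime ideal
separation, using that the implication is preserved), so pulling back along them embeds `H` and
`B` compatibly. As `H` is countable, this amalgam is small. The diagram of `B` over `S` (its
operation tables, `x_{j a} = a` for `a ∈ S`, and `x_b ≠ ⊤` for `b ≠ ⊤`) is then a system with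
parameters in `H` solved in an extension of `H`; a solution in `H` is an embedding of `B` over `S`.

(⇐) Let a system be solved in an extension `K`, and `S` a finite subalgebra of `H` containing the
parameters. The bounded sublattice `D ≤ K` generated by `S`, the solution and the values of all
`⇨`-subterms is finite, hence a Heyting algebra, whose implication agrees with that of `K`
whenever the latter lands in `D`. So `S ↪ D` is a finite extension, the terms of the system are
evaluated in `D` as in `K`, and embedding `D` into `H` over `S` carries the solution into `H`.
-/

open scoped symmDiff

universe u v w

namespace HeytingTerm

variable {H K : Type*} [HeytingAlgebra H] [HeytingAlgebra K] {n : ℕ}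

theorem eval_comp (f : HeytingHom H K) (v : Fin n → H) :
    ∀ u : HeytingTerm n, u.eval (f ∘ v) = f (u.eval v)
  | var _ => rfl
  | bot => (map_bot f).symm
  | top => (map_top f).symm
  | inf a b => by simp only [eval, eval_comp f v a, eval_comp f v b, map_inf]
  | sup a b => by simp only [eval, eval_comp f v a, eval_comp f v b, map_sup]
  | himp a b => by simp only [eval, eval_comp f v a, eval_comp f v b, map_himp]

def bihimp (u v : HeytingTerm n) : HeytingTerm n := inf (himp v u) (himp u v)

@[simp] theorem eval_bihimp (v : Fin n → H) (a b : HeytingTerm n) :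
    (bihimp a b).eval v = a.eval v ⇔ b.eval v := rfl

noncomputable def iInf {ι : Type*} [Finite ι] (u : ι → HeytingTerm n) : HeytingTerm n :=
  (List.ofFn (u ∘ (Finite.equivFin ι).symm)).foldr inf top

theorem eval_foldr_inf_eq_top_iff (v : Fin n → H) :
    ∀ L : List (HeytingTerm n), (L.foldr inf top).eval v = ⊤ ↔ ∀ u ∈ L, u.eval v = ⊤
  | [] => by simp [eval]
  | u :: L => by simp [eval, eval_foldr_inf_eq_top_iff v L]

theorem eval_iInf_eq_top {ι : Type*} [Finite ι] (u : ι → HeytingTerm n) (v : Fin n → H) :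
    (iInf u).eval v = ⊤ ↔ ∀ i, (u i).eval v = ⊤ := by
  rw [iInf, eval_foldr_inf_eq_top_iff, List.forall_mem_ofFn_iff,
    (Finite.equivFin ι).symm.forall_congr_left]
  simp

end HeytingTerm

theorem Fin.comp_append {α β : Type*} {l m : ℕ} (f : α → β) (a : Fin l → α) (b : Fin m → α) :
    f ∘ Fin.append a b = Fin.append (f ∘ a) (f ∘ b) :=
  funext fun i => Fin.addCases (by simp) (by simp) i

theorem HeytingHom.injective_iff_map_eq_top {H K : Type*} [HeytingAlgebra H] [HeytingAlgebra K]
    (f : HeytingHom H K) : Function.Injective f ↔ ∀ a, f a = ⊤ → a = ⊤ := by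
  refine ⟨fun hf a ha => hf (ha.trans (map_top f).symm), fun hf x y hxy => ?_⟩
  exact bihimp_eq_top.1 (hf _ (by rw [map_bihimp, hxy, bihimp_self]))

theorem HeytingAlgebra.exists_orderIso_of_small (K : Type w) [HeytingAlgebra K] [Small.{v} K] :
    ∃ (K' : Type v) (_ : HeytingAlgebra K'), Nonempty (K ≃o K') :=
  letI := (equivShrink K).symm.heytingAlgebra
  ⟨Shrink.{v} K, inferInstance, ⟨⟨equivShrink K, by simp⟩⟩⟩

section Solutions

variable {H K : Type*} [HeytingAlgebra H] [HeytingAlgebra K] {l m κ : ℕ}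

theorem IsSolution.map {t : HeytingTerm (l + m)} {s : Fin κ → HeytingTerm (l + m)}
    {a : Fin l → H} {b : Fin m → H} (hb : IsSolution t s a b) (f : HeytingHom H K)
    (hf : Function.Injective f) : IsSolution t s (f ∘ a) (f ∘ b) := by
  refine ⟨?_, fun k hk => hb.2 k (hf ?_)⟩
  · rw [← Fin.comp_append, HeytingTerm.eval_comp, hb.1, map_top]
  · rwa [← Fin.comp_append, HeytingTerm.eval_comp, ← map_top f] at hk

theorem IsExtClosed.hasSolution_of_small {H : Type u} [HeytingAlgebra H]
    (hH : IsExtClosed.{u, v} H) {K : Type w} [HeytingAlgebra K] [Small.{v} K]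
    (f : HeytingHom H K) (hf : Function.Injective f) (t : HeytingTerm (l + m))
    (s : Fin κ → HeytingTerm (l + m)) (a : Fin l → H) (hsol : HasSolution t s (f ∘ a)) :
    HasSolution t s a := by
  obtain ⟨K', _, ⟨e⟩⟩ := HeytingAlgebra.exists_orderIso_of_small.{v} K
  obtain ⟨b, hb⟩ := hsol
  let e' : HeytingHom K K' := e
  exact hH K' (e'.comp f) (e.injective.comp hf) t s a ⟨_, hb.map e' e.injective⟩

end Solutions

section Diagram

variable {B K : Type*} [Finite B] [HeytingAlgebra K] {l : ℕ}

namespace HeytingTerm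

noncomputable def unknown (b : B) : HeytingTerm (l + Nat.card B) :=
  var (Fin.natAdd l (Finite.equivFin B b))

@[simp] theorem eval_unknown (a : Fin l → K) (φ : B → K) (b : B) :
    (unknown (l := l) b).eval (Fin.append a (φ ∘ (Finite.equivFin B).symm)) = φ b := by
  simp [unknown, eval]

variable [HeytingAlgebra B]

/- The diagram of `B` over the constants `c`: for values `φ b` of the unknowns, `posDiagram c = ⊤`
says that `φ` is a Heyting homomorphism sending `c i` to the `i`-th parameter, and
`negDiagram k ≠ ⊤` for all `k` says that `φ` sends no `b ≠ ⊤` to `⊤`. -/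

noncomputable def posDiagram (c : Fin l → B) : HeytingTerm (l + Nat.card B) :=
  inf (iInf fun p : B × B =>
      inf (bihimp (inf (unknown p.1) (unknown p.2)) (unknown (p.1 ⊓ p.2)))
        (inf (bihimp (sup (unknown p.1) (unknown p.2)) (unknown (p.1 ⊔ p.2)))
          (bihimp (himp (unknown p.1) (unknown p.2)) (unknown (p.1 ⇨ p.2)))))
    (inf (bihimp bot (unknown ⊥)) (iInf fun i => bihimp (var (Fin.castAdd _ i)) (unknown (c i))))

noncomputable def negDiagram (k : Fin (Nat.card {b : B // b ≠ ⊤})) :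
    HeytingTerm (l + Nat.card B) :=
  unknown ((Finite.equivFin {b : B // b ≠ ⊤}).symm k).1

variable (c : Fin l → B) (a : Fin l → K) (φ : B → K)

theorem eval_posDiagram_eq_top_iff :
    (posDiagram c).eval (Fin.append a (φ ∘ (Finite.equivFin B).symm)) = ⊤ ↔
      ((∀ b b', φ b ⊓ φ b' = φ (b ⊓ b')) ∧ (∀ b b', φ b ⊔ φ b' = φ (b ⊔ b')) ∧
        (∀ b b', φ b ⇨ φ b' = φ (b ⇨ b'))) ∧ ⊥ = φ ⊥ ∧ ∀ i, a i = φ (c i) := by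
  simp only [posDiagram, eval, eval_iInf_eq_top, eval_bihimp, eval_unknown, bihimp_eq_top,
    inf_eq_top_iff, forall_and, Prod.forall, Fin.append_left]

theorem forall_eval_negDiagram_ne_top_iff :
    (∀ k, (negDiagram (l := l) k).eval (Fin.append a (φ ∘ (Finite.equivFin B).symm)) ≠ ⊤) ↔
      ∀ b, φ b = ⊤ → b = ⊤ := by
  rw [(Finite.equivFin {b : B // b ≠ ⊤}).symm.forall_congr_left]
  simp [negDiagram, not_imp_not]

end HeytingTerm

open HeytingTerm

variable [HeytingAlgebra B] (c : Fin l → B)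

theorem isSolution_diagram (k : HeytingHom B K) (hk : Function.Injective k) (a : Fin l → K)
    (ha : ∀ i, k (c i) = a i) :
    IsSolution (posDiagram c) negDiagram a (k ∘ (Finite.equivFin B).symm) := by
  refine ⟨(eval_posDiagram_eq_top_iff c a k).2 ⟨⟨?_, ?_, ?_⟩, ?_, ?_⟩,
    (forall_eval_negDiagram_ne_top_iff a k).2 (k.injective_iff_map_eq_top.1 hk)⟩
  all_goals intros; simp [ha]

theorem exists_heytingHom_of_isSolution (a : Fin l → K) (b : Fin (Nat.card B) → K)
    (hb : IsSolution (posDiagram c) negDiagram a b) :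
    ∃ k : HeytingHom B K, Function.Injective k ∧ ∀ i, k (c i) = a i := by
  set φ : B → K := b ∘ Finite.equivFin B
  have hφ : b = φ ∘ (Finite.equivFin B).symm := by ext; simp [φ]
  rw [hφ] at hb
  obtain ⟨⟨hinf, hsup, hhimp⟩, hbot, hpar⟩ := (eval_posDiagram_eq_top_iff c a φ).1 hb.1
  let k : HeytingHom B K :=
    { toFun := φ
      map_sup' := fun x y => (hsup x y).symm
      map_inf' := fun x y => (hinf x y).symm
      map_bot' := hbot.symm
      map_himp' := fun x y => (hhimp x y).symm }
  exact ⟨k, k.injective_iff_map_eq_top.2 ((forall_eval_negDiagram_ne_top_iff a φ).1 hb.2),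
    fun i => (hpar i).symm⟩

end Diagram

theorem IsExtClosed.exists_embedding {H : Type u} [HeytingAlgebra H] (hH : IsExtClosed.{u, v} H)
    {S : Type*} [Finite S] (ι : S → H) {B : Type*} [HeytingAlgebra B] [Finite B] (j : S → B)
    {K : Type w} [HeytingAlgebra K] [Small.{v} K] (f : HeytingHom H K) (hf : Function.Injective f)
    (g : HeytingHom B K) (hg : Function.Injective g) (hfg : ∀ s, g (j s) = f (ι s)) :
    ∃ k : HeytingHom B H, Function.Injective k ∧ ∀ s, k (j s) = ι s := by
  let e := (Finite.equivFin S).symm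
  obtain ⟨b, hb⟩ := hH.hasSolution_of_small f hf (HeytingTerm.posDiagram (j ∘ e))
    HeytingTerm.negDiagram (ι ∘ e) ⟨_, isSolution_diagram (j ∘ e) g hg _ fun i => hfg (e i)⟩
  obtain ⟨k, hk, hkj⟩ := exists_heytingHom_of_isSolution (j ∘ e) (ι ∘ e) b hb
  exact ⟨k, hk, e.surjective.forall.2 hkj⟩

section PrimeIdeals

open Order

variable {L : Type*}

theorem Order.Ideal.exists_isPrime_of_forall_not_le [DistribLattice L] {F I : Set L}
    (hF : InfClosed F) (hFne : F.Nonempty) (hI : SupClosed I) (hIne : I.Nonempty)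
    (hFI : ∀ x ∈ F, ∀ y ∈ I, ¬x ≤ y) :
    ∃ J : Ideal L, J.IsPrime ∧ I ⊆ J ∧ Disjoint F J := by
  have hF' : IsPFilter (upperClosure F : Set L) := by
    refine IsPFilter.of_def (hFne.mono subset_upperClosure) ?_
      fun h hx => (upperClosure F).upper h hx
    rintro x ⟨a, ha, hax⟩ y ⟨b, hb, hby⟩
    exact ⟨a ⊓ b, subset_upperClosure (hF ha hb), inf_le_left.trans hax, inf_le_right.trans hby⟩
  have hI' : IsIdeal (lowerClosure I : Set L) := by
    refine ⟨(lowerClosure I).lower, hIne.mono subset_lowerClosure, ?_⟩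
    rintro x ⟨a, ha, hxa⟩ y ⟨b, hb, hyb⟩
    exact ⟨a ⊔ b, subset_lowerClosure (hI ha hb), hxa.trans le_sup_left, hyb.trans le_sup_right⟩
  obtain ⟨J, hJ, hIJ, hFJ⟩ :=
    DistribLattice.prime_ideal_of_disjoint_filter_ideal (F := hF'.toPFilter) (I := hI'.toIdeal) <|
      Set.disjoint_left.2 fun z ⟨a, ha, haz⟩ ⟨b, hb, hzb⟩ => hFI a ha b hb (haz.trans hzb)
  exact ⟨J, hJ, subset_lowerClosure.trans hIJ, hFJ.mono_left subset_upperClosure⟩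

variable (L) in
abbrev PrimeIdeal [Preorder L] : Type _ := {I : Ideal L // I.IsPrime}

variable [HeytingAlgebra L]

theorem Order.Ideal.IsPrime.inf_mem_iff {I : Ideal L} (hI : I.IsPrime) {x y : L} :
    x ⊓ y ∈ I ↔ x ∈ I ∨ y ∈ I :=
  ⟨hI.mem_or_mem, fun h => h.elim (I.lower inf_le_left) (I.lower inf_le_right)⟩

theorem Order.Ideal.IsPrime.exists_le_of_himp_mem {I : Ideal L} (hI : I.IsPrime) {x y : L}
    (hxy : x ⇨ y ∈ I) : ∃ J : Ideal L, J.IsPrime ∧ J ≤ I ∧ x ∉ J ∧ y ∈ J := by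
  have hF : InfClosed ((· ⊓ x) '' (I : Set L)ᶜ) := by
    rintro _ ⟨p, hp, rfl⟩ _ ⟨q, hq, rfl⟩
    exact ⟨p ⊓ q, fun h => (hI.mem_or_mem h).elim hp hq, inf_inf_distrib_right p q x⟩
  obtain ⟨J, hJ, hyJ, hFJ⟩ := Ideal.exists_isPrime_of_forall_not_le hF
    ⟨⊤ ⊓ x, ⊤, hI.top_notMem, rfl⟩ supClosed_singleton (Set.singleton_nonempty y) <| by
      rintro _ ⟨p, hp, rfl⟩ _ rfl hpy
      exact hp (I.lower (le_himp_iff.2 hpy) hxy)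
  refine ⟨J, hJ, fun z hzJ => ?_, fun hxJ => ?_, hyJ rfl⟩
  · by_contra hzI
    exact Set.disjoint_left.1 hFJ ⟨z, hzI, rfl⟩ (J.lower inf_le_left hzJ)
  · exact Set.disjoint_left.1 hFJ ⟨⊤, hI.top_notMem, rfl⟩ (by simpa using hxJ)

theorem LowerSet.mem_himp_iff {α : Type*} [Preorder α] {s t : LowerSet α} {a : α} :
    a ∈ s ⇨ t ↔ ∀ b ≤ a, b ∈ s → b ∈ t := by
  rw [← LowerSet.Iic_le, le_himp_iff, ← LowerSet.coe_subset_coe, LowerSet.coe_inf]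
  simp [Set.subset_def]

def stoneSet (x : L) : LowerSet (PrimeIdeal L) :=
  ⟨{I | x ∉ I.1}, fun _ _ hJI hx hJ => hx (hJI hJ)⟩

@[simp] theorem mem_stoneSet {x : L} {I : PrimeIdeal L} : I ∈ stoneSet x ↔ x ∉ I.1 := Iff.rfl

variable (L) in
def stoneHom : HeytingHom L (LowerSet (PrimeIdeal L)) where
  toFun := stoneSet
  map_sup' x y := SetLike.ext fun I => by
    simp only [mem_stoneSet, LowerSet.mem_sup_iff, Ideal.sup_mem_iff, not_and_or]
  map_inf' x y := SetLike.ext fun I => by simp [I.2.inf_mem_iff, not_or]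
  map_bot' := SetLike.ext fun I => by simp [Ideal.bot_mem]
  map_himp' x y := SetLike.ext fun I => by
    simp only [mem_stoneSet, LowerSet.mem_himp_iff]
    refine ⟨fun h J hJI hxJ hyJ => ?_, fun h hI => ?_⟩
    · exact h (hJI ((J.2.mem_or_mem (J.1.lower inf_himp_le hyJ)).resolve_left hxJ))
    · obtain ⟨J, hJ, hJI, hxJ, hyJ⟩ := I.2.exists_le_of_himp_mem hI
      exact h ⟨J, hJ⟩ hJI hxJ hyJ

theorem le_of_stoneHom_le {x y : L} (h : stoneHom L x ≤ stoneHom L y) : x ≤ y := by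
  by_contra hxy
  obtain ⟨J, hJ, hyJ, hxJ⟩ := Ideal.exists_isPrime_of_forall_not_le infClosed_singleton
    (Set.singleton_nonempty x) supClosed_singleton (Set.singleton_nonempty y) (by simpa)
  exact h (a := ⟨J, hJ⟩) (Set.disjoint_left.1 hxJ rfl) (hyJ rfl)

theorem stoneHom_injective : Function.Injective (stoneHom L) :=
  fun _ _ h => le_antisymm (le_of_stoneHom_le h.le) (le_of_stoneHom_le h.ge)

/- The filter is generated by `G` and `f (g ⁻¹' Pᶜ)`, the ideal by `f (g ⁻¹' P)`; they are disjoint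
because `f` and `g` preserve `⇨`. -/
theorem Order.Ideal.exists_isPrime_preimage_eq {A M : Type*} [HeytingAlgebra A]
    [HeytingAlgebra M] (f : HeytingHom A L) (g : HeytingHom A M) {P : Ideal M} (hP : P.IsPrime)
    (G : PFilter L) (hG : ∀ a, g a ∈ P → f a ∉ G) :
    ∃ Q : Ideal L, Q.IsPrime ∧ Disjoint (G : Set L) Q ∧ f ⁻¹' Q = g ⁻¹' P := by
  have hF : InfClosed (Set.image2 (· ⊓ f ·) (G : Set L) (g ⁻¹' (P : Set M)ᶜ)) := by
    rintro _ ⟨q, hq, a, ha, rfl⟩ _ ⟨q', hq', a', ha', rfl⟩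
    refine ⟨q ⊓ q', G.inf_mem hq hq', a ⊓ a', ?_, ?_⟩
    · simpa [map_inf, hP.inf_mem_iff] using And.intro ha ha'
    · simp only [map_inf]; ac_rfl
  have hI : SupClosed (f '' (g ⁻¹' P)) := by
    rintro _ ⟨a, ha, rfl⟩ _ ⟨a', ha', rfl⟩
    exact ⟨a ⊔ a', by simpa [Ideal.sup_mem_iff] using And.intro ha ha', map_sup f a a'⟩
  have htop : g ⊤ ∉ P := by simpa using hP.top_notMem
  obtain ⟨Q, hQ, hIQ, hFQ⟩ := Ideal.exists_isPrime_of_forall_not_le hF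
    ⟨⊤ ⊓ f ⊤, ⊤, G.top_mem, ⊤, htop, rfl⟩ hI ⟨f ⊥, ⊥, by simp [Ideal.bot_mem], rfl⟩ <| by
      rintro _ ⟨q, hq, a, ha, rfl⟩ _ ⟨b, hb, rfl⟩ hle
      have hab : f (a ⇨ b) ∈ G := G.mem_of_le (by simpa using hle) hq
      have : g a ⊓ g (a ⇨ b) ∈ P := P.lower (by simp) hb
      exact (hP.mem_or_mem this).elim ha fun h => hG _ h hab
  refine ⟨Q, hQ, Set.disjoint_left.2 fun q hq hqQ => ?_,
    Set.ext fun a => ⟨fun ha => ?_, fun ha => hIQ ⟨a, ha, rfl⟩⟩⟩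
  · exact Set.disjoint_left.1 hFQ ⟨q, hq, ⊤, htop, rfl⟩ (Q.lower inf_le_left hqQ)
  · by_contra h
    exact Set.disjoint_left.1 hFQ ⟨⊤, G.top_mem, a, h, rfl⟩ (Q.lower inf_le_right ha)

end PrimeIdeals

section LowerSetComap

variable {α β : Type*} [Preorder α] [Preorder β] {φ : α →o β}

/-- `hφ` says that `φ` is a p-morphism. -/
def LowerSet.comapHeytingHom (φ : α →o β) (hφ : ∀ a b, b ≤ φ a → ∃ a' ≤ a, φ a' = b) :
    HeytingHom (LowerSet β) (LowerSet α) where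
  toFun s := ⟨φ ⁻¹' s, fun _ _ h ha => s.lower (φ.mono h) ha⟩
  map_sup' _ _ := rfl
  map_inf' _ _ := rfl
  map_bot' := rfl
  map_himp' s t := SetLike.ext fun a => by
    rw [LowerSet.mem_himp_iff]
    change φ a ∈ s ⇨ t ↔ ∀ b ≤ a, φ b ∈ s → φ b ∈ t
    rw [LowerSet.mem_himp_iff]
    refine ⟨fun h b hba => h (φ b) (φ.mono hba), fun h b hba hbs => ?_⟩
    obtain ⟨a', ha', rfl⟩ := hφ a b hba
    exact h a' ha' hbs

theorem LowerSet.comapHeytingHom_injective (hφ : ∀ a b, b ≤ φ a → ∃ a' ≤ a, φ a' = b)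
    (hsurj : Function.Surjective φ) : Function.Injective (LowerSet.comapHeytingHom φ hφ) :=
  fun _ _ hst => SetLike.ext fun b => by
    obtain ⟨a, rfl⟩ := hsurj b
    exact SetLike.ext_iff.1 hst a

end LowerSetComap

section Amalgamation

open Order

variable {S H B : Type*} [HeytingAlgebra S] [HeytingAlgebra H] [HeytingAlgebra B]
  (ι : HeytingHom S H) (j : HeytingHom S B)

abbrev AmalgSpace : Type _ :=
  {z : PrimeIdeal H × PrimeIdeal B // ι ⁻¹' (z.1.1 : Set H) = j ⁻¹' (z.2.1 : Set B)}

namespace AmalgSpace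

def fst : AmalgSpace ι j →o PrimeIdeal H := ⟨fun z => z.1.1, fun _ _ h => (Prod.le_def.1 h).1⟩

def snd : AmalgSpace ι j →o PrimeIdeal B := ⟨fun z => z.1.2, fun _ _ h => (Prod.le_def.1 h).2⟩

variable {ι j}

theorem fst_surjective (hj : Function.Injective j) : Function.Surjective (fst ι j) := by
  intro P
  obtain ⟨Q, hQ, -, hQP⟩ := Ideal.exists_isPrime_preimage_eq j ι P.2 (PFilter.principal ⊤)
    fun a ha hja => P.2.top_notMem <| by
      rwa [(j.injective_iff_map_eq_top.1 hj) a (top_le_iff.1 hja), map_top] at ha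
  exact ⟨⟨(P, ⟨Q, hQ⟩), hQP.symm⟩, rfl⟩

theorem snd_surjective (hι : Function.Injective ι) : Function.Surjective (snd ι j) := by
  intro Q
  obtain ⟨P, hP, -, hPQ⟩ := Ideal.exists_isPrime_preimage_eq ι j Q.2 (PFilter.principal ⊤)
    fun a ha hιa => Q.2.top_notMem <| by
      rwa [(ι.injective_iff_map_eq_top.1 hι) a (top_le_iff.1 hιa), map_top] at ha
  exact ⟨⟨(⟨P, hP⟩, Q), hPQ⟩, rfl⟩

theorem exists_le_fst_eq (z : AmalgSpace ι j) (P : PrimeIdeal H) (hP : P ≤ fst ι j z) :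
    ∃ z' ≤ z, fst ι j z' = P := by
  have hF := z.1.2.2.toPrimePair.compl_I_eq_F
  obtain ⟨Q, hQ, hQz, hQP⟩ := Ideal.exists_isPrime_preimage_eq j ι P.2 z.1.2.2.toPrimePair.F
    fun a ha hja => by
      rw [← SetLike.mem_coe, ← hF] at hja
      exact hja (Set.ext_iff.1 z.2 a |>.1 (hP ha))
  refine ⟨⟨(P, ⟨Q, hQ⟩), hQP.symm⟩, ⟨hP, fun b hb => ?_⟩, rfl⟩
  by_contra h
  exact Set.disjoint_left.1 hQz (hF ▸ h) hb

theorem exists_le_snd_eq (z : AmalgSpace ι j) (Q : PrimeIdeal B) (hQ : Q ≤ snd ι j z) :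
    ∃ z' ≤ z, snd ι j z' = Q := by
  have hF := z.1.1.2.toPrimePair.compl_I_eq_F
  obtain ⟨P, hP, hPz, hPQ⟩ := Ideal.exists_isPrime_preimage_eq ι j Q.2 z.1.1.2.toPrimePair.F
    fun a ha hιa => by
      rw [← SetLike.mem_coe, ← hF] at hιa
      exact hιa (Set.ext_iff.1 z.2 a |>.2 (hQ ha))
  refine ⟨⟨(⟨P, hP⟩, Q), hPQ⟩, ⟨fun b hb => ?_, hQ⟩, rfl⟩
  by_contra h
  exact Set.disjoint_left.1 hPz (hF ▸ h) hb

end AmalgSpace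

def amalgLeft : HeytingHom H (LowerSet (AmalgSpace ι j)) :=
  (LowerSet.comapHeytingHom (AmalgSpace.fst ι j) AmalgSpace.exists_le_fst_eq).comp (stoneHom H)

def amalgRight : HeytingHom B (LowerSet (AmalgSpace ι j)) :=
  (LowerSet.comapHeytingHom (AmalgSpace.snd ι j) AmalgSpace.exists_le_snd_eq).comp (stoneHom B)

theorem amalgLeft_apply_eq (s : S) : amalgLeft ι j (ι s) = amalgRight ι j (j s) :=
  SetLike.ext fun z => not_congr (Set.ext_iff.1 z.2 s)

variable {ι j}

theorem amalgLeft_injective (hj : Function.Injective j) : Function.Injective (amalgLeft ι j) :=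
  (LowerSet.comapHeytingHom_injective AmalgSpace.exists_le_fst_eq
    (AmalgSpace.fst_surjective hj)).comp stoneHom_injective

theorem amalgRight_injective (hι : Function.Injective ι) : Function.Injective (amalgRight ι j) :=
  (LowerSet.comapHeytingHom_injective AmalgSpace.exists_le_snd_eq
    (AmalgSpace.snd_surjective hι)).comp stoneHom_injective

instance [Countable H] [Countable B] : Small.{v} (LowerSet (AmalgSpace ι j)) :=
  have : Small.{v} (AmalgSpace ι j) :=
    small_of_injective (f := fun z : AmalgSpace ι j => ((z.1.1.1 : Set H), (z.1.2.1 : Set B)))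
      fun z z' h => by
        simp only [Prod.mk.injEq, SetLike.coe_set_eq] at h
        ext <;> simp [h]
  small_of_injective (f := fun s : LowerSet (AmalgSpace ι j) => (s : Set (AmalgSpace ι j)))
    SetLike.coe_injective

end Amalgamation

def FiniteExtensionsEmbed (H : Type u) [HeytingAlgebra H] : Prop :=
  ∀ (S : HeytingSubalgebra H), S.carrier.Finite →
    ∀ (B : Type w) [HeytingAlgebra B] [Finite B] (j : HeytingHom S.carrier B),
      Function.Injective j →
        ∃ k : HeytingHom B H, Function.Injective k ∧ ∀ a : S.carrier, k (j a) = ↑a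

def HeytingSubalgebra.subtype {H : Type*} [HeytingAlgebra H] (S : HeytingSubalgebra H) :
    HeytingHom S.carrier H where
  toFun := Subtype.val
  map_sup' _ _ := rfl
  map_inf' _ _ := rfl
  map_bot' := rfl
  map_himp' _ _ := rfl

@[simp] theorem HeytingSubalgebra.coe_subtype {H : Type*} [HeytingAlgebra H]
    (S : HeytingSubalgebra H) : ⇑S.subtype = Subtype.val := rfl

theorem IsExtClosed.finiteExtensionsEmbed {H : Type u} [HeytingAlgebra H] [Countable H]
    (hH : IsExtClosed.{u, v} H) : FiniteExtensionsEmbed.{u, w} H := by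
  intro S hS B _ _ j hj
  have := hS.to_subtype
  exact hH.exists_embedding S.subtype j (amalgLeft S.subtype j) (amalgLeft_injective hj)
    (amalgRight S.subtype j) (amalgRight_injective Subtype.val_injective)
    fun s => (amalgLeft_apply_eq _ _ s).symm

theorem FiniteExtensionsEmbed.exists_embedding {H : Type u} [HeytingAlgebra H]
    (hH : FiniteExtensionsEmbed.{u, w} H) {S : HeytingSubalgebra H} (hS : S.carrier.Finite)
    {B : Type*} [HeytingAlgebra B] [Finite B] (j : HeytingHom S.carrier B)
    (hj : Function.Injective j) :
    ∃ k : HeytingHom B H, Function.Injective k ∧ ∀ a : S.carrier, k (j a) = ↑a := by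
  obtain ⟨B', _, ⟨e⟩⟩ := HeytingAlgebra.exists_orderIso_of_small.{w} B
  have : Finite B' := Finite.of_equiv B e.toEquiv
  let e' : HeytingHom B B' := e
  obtain ⟨k, hk, hkj⟩ := hH S hS B' (e'.comp j) (e.injective.comp hj)
  exact ⟨k.comp e', hk.comp e.injective, hkj⟩

section FiniteSublattices

variable {A D K : Type*} [HeytingAlgebra A] [HeytingAlgebra D] [HeytingAlgebra K]

theorem map_himp_of_mem_range {F : Type*} [FunLike F D K] [InfHomClass F D K] (g : F)
    (hg : Function.Injective g) {a b : D} (h : g a ⇨ g b ∈ Set.range g) :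
    g (a ⇨ b) = g a ⇨ g b := by
  obtain ⟨c, hc⟩ := h
  have hle : ∀ {x y}, g x ≤ g y → x ≤ y := fun h =>
    inf_eq_left.1 (hg (by rw [map_inf, inf_eq_left.2 h]))
  suffices a ⇨ b = c by rw [this, hc]
  refine le_antisymm (hle ?_) (le_himp_iff.2 (hle ?_))
  · rw [hc, le_himp_iff, ← map_inf]
    exact OrderHomClass.mono g himp_inf_le
  · rw [map_inf, hc]
    exact himp_inf_le

theorem HeytingHom.exists_lift_of_range_subset (φ : HeytingHom A K) (g : BoundedLatticeHom D K)
    (hg : Function.Injective g) (hφg : Set.range φ ⊆ Set.range g) :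
    ∃ ψ : HeytingHom A D, ∀ x, g (ψ x) = φ x := by
  choose ψ hψ using fun x => hφg ⟨x, rfl⟩
  refine ⟨{ toFun := ψ
            map_sup' := fun x y => hg (by simp [hψ])
            map_inf' := fun x y => hg (by simp [hψ])
            map_bot' := hg (by simp [hψ])
            map_himp' := fun x y => hg ?_ }, hψ⟩
  rw [map_himp_of_mem_range g hg, hψ, hψ, hψ, map_himp]
  rw [hψ, hψ, ← map_himp]
  exact hφg ⟨_, rfl⟩

theorem exists_finite_sublattice {K : Type v} [HeytingAlgebra K] {G : Set K} (hG : G.Finite) :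
    ∃ (D : Type v) (_ : HeytingAlgebra D) (_ : Finite D) (g : BoundedLatticeHom D K),
      Function.Injective g ∧ G ⊆ Set.range g := by
  set L := latticeClosure (insert ⊥ (insert ⊤ G))
  have hL := (isSublattice_latticeClosure (s := insert ⊥ (insert ⊤ G)))
  have hbot : ⊥ ∈ L := subset_latticeClosure (Set.mem_insert _ _)
  have htop : ⊤ ∈ L := subset_latticeClosure (Set.mem_insert_of_mem _ (Set.mem_insert _ _))
  let : DistribLattice L :=
    Subtype.distribLattice (fun _ _ ha hb => hL.1 ha hb) (fun _ _ ha hb => hL.2 ha hb)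
  let : BoundedOrder L := Subtype.boundedOrder hbot htop
  have : Finite L := ((hG.insert _).insert _).latticeClosure.to_subtype
  let : Fintype L := Fintype.ofFinite L
  let := Fintype.toCompleteDistribLattice L
  refine ⟨↥L, inferInstance, inferInstance,
    ⟨⟨⟨Subtype.val, fun _ _ => rfl⟩, fun _ _ => rfl⟩, rfl, rfl⟩, Subtype.val_injective,
    fun x hx => ⟨⟨x, subset_latticeClosure ?_⟩, rfl⟩⟩
  exact Set.mem_insert_of_mem _ (Set.mem_insert_of_mem _ hx)

end FiniteSublattices

namespace HeytingTerm

variable {D K : Type*} [HeytingAlgebra D] [HeytingAlgebra K] {n : ℕ}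

def himpValues (v : Fin n → K) : HeytingTerm n → Set K
  | var _ | bot | top => ∅
  | inf a b | sup a b => a.himpValues v ∪ b.himpValues v
  | himp a b => insert (a.eval v ⇨ b.eval v) (a.himpValues v ∪ b.himpValues v)

theorem himpValues_finite (v : Fin n → K) : ∀ u : HeytingTerm n, (u.himpValues v).Finite
  | var _ | bot | top => Set.finite_empty
  | inf a b | sup a b => (himpValues_finite v a).union (himpValues_finite v b)
  | himp a b => ((himpValues_finite v a).union (himpValues_finite v b)).insert _

theorem eval_comp_of_himpValues_subset (g : BoundedLatticeHom D K) (hg : Function.Injective g)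
    (w : Fin n → D) : ∀ u : HeytingTerm n, u.himpValues (g ∘ w) ⊆ Set.range g →
      u.eval (g ∘ w) = g (u.eval w)
  | var _, _ => rfl
  | bot, _ => (map_bot g).symm
  | top, _ => (map_top g).symm
  | inf a b, h => by
    rw [eval, eval, map_inf, eval_comp_of_himpValues_subset g hg w a fun _ hx => h (.inl hx),
      eval_comp_of_himpValues_subset g hg w b fun _ hx => h (.inr hx)]
  | sup a b, h => by
    rw [eval, eval, map_sup, eval_comp_of_himpValues_subset g hg w a fun _ hx => h (.inl hx),
      eval_comp_of_himpValues_subset g hg w b fun _ hx => h (.inr hx)]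
  | himp a b, h => by
    have ha := eval_comp_of_himpValues_subset g hg w a fun _ hx => h (.inr (.inl hx))
    have hb := eval_comp_of_himpValues_subset g hg w b fun _ hx => h (.inr (.inr hx))
    rw [eval, eval, ha, hb, map_himp_of_mem_range g hg (ha ▸ hb ▸ h (.inl rfl))]

end HeytingTerm

theorem FiniteExtensionsEmbed.isExtClosed {H : Type u} [HeytingAlgebra H]
    (hlf : LocallyFiniteHA H) (hH : FiniteExtensionsEmbed.{u, w} H) : IsExtClosed.{u, v} H := by
  classical
  intro K _ f hf l m κ t s a ⟨b, hb⟩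
  obtain ⟨S, hS, haS⟩ := hlf (Finset.univ.image a)
  set v := Fin.append (f ∘ a) b
  obtain ⟨D, _, _, g, hg, hGD⟩ := exists_finite_sublattice
    (((hS.image f).union (Set.finite_range v)).union
      ((t.himpValues_finite v).union (Set.finite_iUnion fun k => (s k).himpValues_finite v)))
  obtain ⟨ψ, hψ⟩ := (f.comp S.subtype).exists_lift_of_range_subset g hg <| by
    rintro _ ⟨x, rfl⟩
    exact hGD (.inl (.inl ⟨x, x.2, rfl⟩))
  obtain ⟨k, hk, hkψ⟩ := hH.exists_embedding hS ψ fun x y h =>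
    Subtype.val_injective (hf (by simpa [hψ] using congrArg g h))
  choose w hw using fun i => hGD (.inl (.inr ⟨i, rfl⟩))
  have hval : Fin.append a (k ∘ w ∘ Fin.natAdd l) = k ∘ w := by
    conv_rhs => rw [← Fin.append_castAdd_natAdd (f := k ∘ w)]
    congr 1
    funext i
    have hai : a i ∈ S.carrier := haS (by simp)
    have : w (Fin.castAdd m i) = ψ ⟨a i, hai⟩ := hg (by simp [hw, hψ, v])
    simp [this, hkψ]
  have heval : ∀ u : HeytingTerm (l + m), u.himpValues v ⊆ Set.range g →
      (u.eval (k ∘ w) = ⊤ ↔ u.eval v = ⊤) := by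
    intro u hu
    rw [show v = g ∘ w from (funext hw).symm] at hu ⊢
    rw [HeytingTerm.eval_comp, HeytingTerm.eval_comp_of_himpValues_subset g hg w u hu,
      hk.eq_iff' (map_top k), hg.eq_iff' (map_top g)]
  refine ⟨k ∘ w ∘ Fin.natAdd l, ?_, fun i => ?_⟩
  · rw [hval, heval t fun _ hx => hGD (.inr (.inl hx))]
    exact hb.1
  · rw [hval, Ne, heval (s i) fun _ hx => hGD (.inr (.inr (Set.mem_iUnion.2 ⟨i, hx⟩)))]
    exact hb.2 i

/-- A countable locally finite Heyting algebra is existentially closed iff every finite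
extension of a finite subalgebra of `H` embeds into `H` over that subalgebra. -/
theorem countable_locallyFinite_extClosed_iff_finite_extension_embeds
    (H : Type*) [HeytingAlgebra H] [Countable H] (hlf : LocallyFiniteHA H) :
    IsExtClosed H ↔
      ∀ (S : HeytingSubalgebra H), S.carrier.Finite →
        ∀ (B : Type*) [HeytingAlgebra B] [Finite B] (j : HeytingHom S.carrier B),
          Function.Injective j →
            ∃ k : HeytingHom B H, Function.Injective k ∧ ∀ a : S.carrier, k (j a) = ↑a :=
  ⟨IsExtClosed.finiteExtensionsEmbed, FiniteExtensionsEmbed.isExtClosed hlf⟩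
end

section
/- A Heyting algebra A has the QE property if and only if for every n ∈ ℕ and every first-order L_HA-formula φ with n free variables there exists a quantifier-free L_HA-formula ψ with n free variables such that for every tuple ā ∈ Aⁿ, A satisfies φ(ā) if and only if A satisfies ψ(ā). -/
/-- `a ≈ₙ a'`: the tuples satisfy the same equations `t = ⊤` for terms of degree `≤ n`. -/
def SimDeg {l : ℕ} {A : Type*} [HeytingAlgebra A] (n : ℕ) (a a' : Fin l → A) : Prop :=
  ∀ t : HeytingTerm l, t.degree ≤ n → (t.eval a = ⊤ ↔ t.eval a' = ⊤)

/-- `n` witnesses the `(l,d)`-index property for `A`: for all `a ≈ₙ a'` and every system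
of degree `≤ d` in `l` parameters and one unknown, `S(a,q)` is solvable in `A` iff
`S(a',q)` is. -/
def IndexProp (A : Type*) [HeytingAlgebra A] (l d n : ℕ) : Prop :=
  ∀ a a' : Fin l → A, SimDeg n a a' →
    ∀ (κ : ℕ) (t : HeytingTerm (l + 1)) (s : Fin κ → HeytingTerm (l + 1)),
      t.degree ≤ d → (∀ k, (s k).degree ≤ d) →
      (HasSolution t s a ↔ HasSolution t s a')

/-- The `(l,d)`-index `h_{l,d}(A) ∈ ℕ ∪ {∞}`: the least `n` satisfying `IndexProp A l d n`,
or `∞` if there is none. -/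
noncomputable def hIndex (A : Type*) [HeytingAlgebra A] (l d : ℕ) : ℕ∞ :=
  sInf {x : ℕ∞ | ∃ n : ℕ, x = ↑n ∧ IndexProp A l d n}

/-- The QE property: all the `(l,d)`-indices are finite. -/
def HasQEProp (A : Type*) [HeytingAlgebra A] : Prop :=
  ∀ l d : ℕ, hIndex A l d < ⊤

/-- The function symbols of the first-order language of Heyting algebras: two constants
(`⊥`, `⊤`) and three binary operations (`⊓`, `⊔`, `⇨`). -/
inductive LHAFunc : ℕ → Type
  | bot : LHAFunc 0
  | top : LHAFunc 0
  | inf : LHAFunc 2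
  | sup : LHAFunc 2
  | himp : LHAFunc 2

/-- The first-order language of Heyting algebras. -/
def LHA : FirstOrder.Language := ⟨LHAFunc, fun _ => Empty⟩

/-- Every Heyting algebra is an `LHA`-structure, interpreting the symbols by the
Heyting operations. -/
instance LHA.structure (H : Type*) [HeytingAlgebra H] : LHA.Structure H where
  funMap {_} f x :=
    match f with
    | .bot => ⊥
    | .top => ⊤
    | .inf => x 0 ⊓ x 1
    | .sup => x 0 ⊔ x 1
    | .himp => x 0 ⇨ x 1
  RelMap {_} r := Empty.elim r

/-!
For fixed `m` and `d`, a term of degree `≤ d` in `m` variables is a lattice combination of the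
variables, `⊥`, `⊤` and implications between terms of degree `< d`; as finitely generated
distributive lattices are finite, there are only finitely many term functions of degree `≤ d`.
So `≈_d` has finitely many classes, each cut out by a finite conjunction of equations `t = ⊤` and
inequations `t ≠ ⊤`, and a predicate is `≈_d`-invariant for some `d` iff it is quantifier-free
definable (`s = t` iff `(s ⇨ t) ⊓ (t ⇨ s) = ⊤`). Eliminating `∃ q` from an `≈_d`-invariant
predicate yields a finite disjunction of solvability statements for systems of degree `≤ d` in
one unknown, which the QE property makes `≈_n`-invariant. Conversely, under quantifier
elimination each solvability predicate is quantifier-free definable, hence invariant, and for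
systems of degree `≤ d` there are only finitely many such predicates, so one `n` serves them all.
-/

open FirstOrder FirstOrder.Language Set

theorem sumElim_comp_finSumFinEquiv_symm {α : Type*} {n k : ℕ} (a : Fin n → α) (x : Fin k → α) :
    Sum.elim a x ∘ finSumFinEquiv.symm = Fin.append a x := by
  rw [← Fin.append_comp_sumElim]
  funext i
  exact congrArg (Fin.append a x) (finSumFinEquiv.apply_symm_apply i)

theorem Fin.append_append_eq_append_snoc {α : Type*} {n k : ℕ} (a : Fin n → α) (x : Fin k → α)
    (b : Fin 1 → α) : Fin.append (Fin.append a x) b = Fin.append a (Fin.snoc x (b 0)) := by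
  rw [Fin.append_right_eq_snoc, Fin.append_snoc]

namespace FirstOrder.Language.BoundedFormula

variable {L : Language} {α β : Type*} {n : ℕ} [Finite β] {f : β → L.BoundedFormula α n}

theorem isQF_iSup (h : ∀ b, (f b).IsQF) : (iSup f).IsQF := by
  let _ := Fintype.ofFinite β
  show ((Finset.univ.toList.map f).foldr (· ⊔ ·) ⊥).IsQF
  induction (Finset.univ : Finset β).toList with
  | nil => exact isQF_bot
  | cons b _ ih => exact (h b).sup ih

theorem isQF_iInf (h : ∀ b, (f b).IsQF) : (iInf f).IsQF := by
  let _ := Fintype.ofFinite β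
  show ((Finset.univ.toList.map f).foldr (· ⊓ ·) ⊤).IsQF
  induction (Finset.univ : Finset β).toList with
  | nil => exact IsQF.top
  | cons b _ ih => exact (h b).inf ih

end FirstOrder.Language.BoundedFormula

namespace HeytingTerm

variable {H : Type*} [HeytingAlgebra H] {m : ℕ}

variable (H m) in
def termFunctions (d : ℕ) : Set ((Fin m → H) → H) :=
  (fun (t : HeytingTerm m) v => t.eval v) '' {t | t.degree ≤ d}

theorem eval_mem_latticeClosure {d : ℕ} {S : Set ((Fin m → H) → H)}
    (hS : ∀ a : HeytingTerm m, a.degree < d → (fun v => a.eval v) ∈ S) :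
    ∀ t : HeytingTerm m, t.degree ≤ d → (fun v => t.eval v) ∈
      latticeClosure (insert ⊥ (insert ⊤ (range (fun i v => v i) ∪ image2 (· ⇨ ·) S S)))
  | var i, _ => subset_latticeClosure <| mem_insert_of_mem _ <| mem_insert_of_mem _ <|
      Or.inl (mem_range_self i)
  | bot, _ => subset_latticeClosure <| mem_insert _ _
  | top, _ => subset_latticeClosure <| mem_insert_of_mem _ <| mem_insert _ _
  | inf a b, h => isSublattice_latticeClosure.infClosed
      (eval_mem_latticeClosure hS a (le_of_max_le_left h))
      (eval_mem_latticeClosure hS b (le_of_max_le_right h))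
  | sup a b, h => isSublattice_latticeClosure.supClosed
      (eval_mem_latticeClosure hS a (le_of_max_le_left h))
      (eval_mem_latticeClosure hS b (le_of_max_le_right h))
  | himp a b, h => by
      simp only [degree] at h
      exact subset_latticeClosure <| mem_insert_of_mem _ <| mem_insert_of_mem _ <| Or.inr
        (mem_image2_of_mem (hS a (by omega)) (hS b (by omega)))

variable (H m) in
theorem finite_termFunctions (d : ℕ) :
    (termFunctions H m d).Finite := by
  have gens_finite {S : Set ((Fin m → H) → H)} (hS : S.Finite) :
      (insert ⊥ (insert ⊤ (range (fun i v => v i) ∪ image2 (· ⇨ ·) S S))).Finite :=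
    ((finite_range _).union (hS.image2 _ hS)).insert _ |>.insert _
  induction d with
  | zero =>
    refine (gens_finite finite_empty).latticeClosure.subset ?_
    rintro _ ⟨t, ht, rfl⟩
    exact eval_mem_latticeClosure (fun a ha => absurd ha (Nat.not_lt_zero _)) t ht
  | succ d ih =>
    refine (gens_finite ih).latticeClosure.subset ?_
    rintro _ ⟨t, ht, rfl⟩
    exact eval_mem_latticeClosure (S := termFunctions H m d)
      (fun a ha => ⟨a, Nat.lt_succ_iff.mp ha, rfl⟩) t ht

variable (H) in
def IsDegreeBasis (d : ℕ) (B : Finset (HeytingTerm m)) : Prop :=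
  (∀ t ∈ B, t.degree ≤ d) ∧
    ∀ t : HeytingTerm m, t.degree ≤ d → ∃ t' ∈ B, ∀ v : Fin m → H, t'.eval v = t.eval v

variable (H m) in
theorem exists_isDegreeBasis (d : ℕ) :
    ∃ B : Finset (HeytingTerm m), IsDegreeBasis H d B := by
  classical
  have hfin := finite_termFunctions H m d
  obtain ⟨B, hBd, hBimage⟩ := Finset.subset_set_image_iff.mp
    (hfin.coe_toFinset.subset : _ ⊆ (fun (t : HeytingTerm m) v => t.eval v) '' _)
  refine ⟨B, hBd, fun t ht => ?_⟩
  have : (fun v => t.eval v) ∈ B.image (fun t (v : Fin m → H) => t.eval v) := by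
    rw [hBimage, Finite.mem_toFinset]
    exact ⟨t, ht, rfl⟩
  obtain ⟨t', ht'B, ht'⟩ := Finset.mem_image.mp this
  exact ⟨t', ht'B, congrFun ht'⟩

def listInf : List (HeytingTerm m) → HeytingTerm m :=
  List.foldr inf top

theorem eval_listInf_eq_top {L : List (HeytingTerm m)} {v : Fin m → H} :
    (listInf L).eval v = ⊤ ↔ ∀ t ∈ L, t.eval v = ⊤ := by
  induction L with
  | nil => simp [listInf, eval]
  | cons a L ih => simp [listInf, eval, ← ih]

theorem degree_listInf_le {L : List (HeytingTerm m)} {d : ℕ} (h : ∀ t ∈ L, t.degree ≤ d) :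
    (listInf L).degree ≤ d := by
  induction L with
  | nil => exact Nat.zero_le d
  | cons a L ih =>
    exact max_le (h a List.mem_cons_self) (ih fun t ht => h t (List.mem_cons_of_mem a ht))

def toTerm : HeytingTerm m → LHA.Term (Fin m)
  | var i => Term.var i
  | bot => Term.func LHAFunc.bot ![]
  | top => Term.func LHAFunc.top ![]
  | inf a b => Term.func LHAFunc.inf ![a.toTerm, b.toTerm]
  | sup a b => Term.func LHAFunc.sup ![a.toTerm, b.toTerm]
  | himp a b => Term.func LHAFunc.himp ![a.toTerm, b.toTerm]

@[simp]
theorem realize_toTerm (v : Fin m → H) : ∀ t : HeytingTerm m, t.toTerm.realize v = t.eval v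
  | var _ | bot | top => rfl
  | inf a b | sup a b | himp a b => by
    simp only [toTerm, eval, ← realize_toTerm v a, ← realize_toTerm v b]; rfl

def ofTerm {β : Type*} (g : β → Fin m) : LHA.Term β → HeytingTerm m
  | .var b => var (g b)
  | .func LHAFunc.bot _ => bot
  | .func LHAFunc.top _ => top
  | .func LHAFunc.inf ts => inf (ofTerm g (ts 0)) (ofTerm g (ts 1))
  | .func LHAFunc.sup ts => sup (ofTerm g (ts 0)) (ofTerm g (ts 1))
  | .func LHAFunc.himp ts => himp (ofTerm g (ts 0)) (ofTerm g (ts 1))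

theorem eval_ofTerm {β : Type*} (g : β → Fin m) (v : Fin m → H) :
    ∀ t : LHA.Term β, (ofTerm g t).eval v = t.realize (v ∘ g)
  | .var _ => rfl
  | .func LHAFunc.bot _ | .func LHAFunc.top _ => rfl
  | .func LHAFunc.inf ts | .func LHAFunc.sup ts | .func LHAFunc.himp ts => by
    simp only [ofTerm, eval, eval_ofTerm g v (ts 0), eval_ofTerm g v (ts 1)]; rfl

variable {n k : ℕ}

def eqTopFormula (t : HeytingTerm (n + k)) : LHA.BoundedFormula (Fin n) k :=
  (t.toTerm.relabel finSumFinEquiv.symm).bdEqual (top.toTerm.relabel finSumFinEquiv.symm)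

theorem isQF_eqTopFormula (t : HeytingTerm (n + k)) : t.eqTopFormula.IsQF :=
  (BoundedFormula.IsAtomic.equal _ _).isQF

@[simp]
theorem realize_eqTopFormula (t : HeytingTerm (n + k)) (a : Fin n → H) (x : Fin k → H) :
    t.eqTopFormula.Realize a x ↔ t.eval (Fin.append a x) = ⊤ := by
  simp only [eqTopFormula, BoundedFormula.realize_bdEqual, Term.realize_relabel,
    sumElim_comp_finSumFinEquiv_symm, realize_toTerm]
  rfl

end HeytingTerm

section

variable {A : Type*} [HeytingAlgebra A] {l : ℕ}

def IsSimDegInvariant (n : ℕ) (P : (Fin l → A) → Prop) : Prop :=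
  ∀ a a', SimDeg n a a' → (P a ↔ P a')

theorem SimDeg.mono {n n' : ℕ} {a a' : Fin l → A} (h : n' ≤ n) (hs : SimDeg n a a') :
    SimDeg n' a a' :=
  fun t ht => hs t (ht.trans h)

theorem IsSimDegInvariant.mono {n n' : ℕ} {P : (Fin l → A) → Prop} (h : n ≤ n')
    (hP : IsSimDegInvariant n P) : IsSimDegInvariant n' P :=
  fun a a' hs => hP a a' (hs.mono h)

theorem SimDeg.eval_eq_iff {a b : HeytingTerm l} {v w : Fin l → A}
    (h : SimDeg (max a.degree b.degree + 1) v w) : a.eval v = b.eval v ↔ a.eval w = b.eval w := by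
  have key (u : Fin l → A) : (HeytingTerm.inf (.himp a b) (.himp b a)).eval u = ⊤ ↔
      a.eval u = b.eval u := by
    simp only [HeytingTerm.eval, inf_eq_top_iff, himp_eq_top_iff]
    exact le_antisymm_iff.symm
  rw [← key, ← key]
  exact h _ (by simp only [HeytingTerm.degree]; omega)

open Classical in
noncomputable def typeOf (B : Finset (HeytingTerm l)) (v : Fin l → A) : Finset (HeytingTerm l) :=
  B.filter fun t => t.eval v = ⊤

theorem typeOf_eq_iff {B T : Finset (HeytingTerm l)} (hT : T ⊆ B) {v : Fin l → A} :
    typeOf B v = T ↔ ∀ t ∈ B, (t.eval v = ⊤ ↔ t ∈ T) := by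
  simp only [typeOf, Finset.ext_iff, Finset.mem_filter]
  constructor
  · intro h t ht
    rw [← h t, and_iff_right ht]
  · intro h t
    exact ⟨fun ⟨htB, htv⟩ => (h t htB).mp htv, fun htT => ⟨hT htT, (h t (hT htT)).mpr htT⟩⟩

theorem HeytingTerm.IsDegreeBasis.simDeg_iff {d : ℕ} {B : Finset (HeytingTerm l)}
    (hB : HeytingTerm.IsDegreeBasis A d B) {v w : Fin l → A} :
    SimDeg d v w ↔ typeOf B v = typeOf B w := by
  constructor
  · intro hs
    ext t
    simp only [typeOf, Finset.mem_filter]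
    exact and_congr_right fun ht => hs t (hB.1 t ht)
  · intro h t ht
    obtain ⟨t', ht'B, ht'⟩ := hB.2 t ht
    rw [← ht' v, ← ht' w]
    simpa [typeOf, ht'B] using congrArg (t' ∈ ·) h

theorem IsSimDegInvariant.exists_types {d : ℕ} {P : (Fin l → A) → Prop}
    (hP : IsSimDegInvariant d P) {B : Finset (HeytingTerm l)}
    (hB : HeytingTerm.IsDegreeBasis A d B) :
    ∃ 𝒯 : Finset (Finset (HeytingTerm l)), (∀ T ∈ 𝒯, T ⊆ B) ∧ ∀ v, P v ↔ typeOf B v ∈ 𝒯 := by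
  classical
  refine ⟨B.powerset.filter fun T => ∃ w, P w ∧ typeOf B w = T,
    fun T hT => Finset.mem_powerset.mp (Finset.mem_filter.mp hT).1, fun v => ?_⟩
  simp only [Finset.mem_filter, Finset.mem_powerset]
  constructor
  · exact fun hv => ⟨Finset.filter_subset _ _, v, hv, rfl⟩
  · rintro ⟨-, w, hw, hwv⟩
    exact (hP w v (hB.simDeg_iff.mpr hwv)).mp hw

open Classical in
noncomputable def typeFormula {n k : ℕ} (B T : Finset (HeytingTerm (n + k))) :
    LHA.BoundedFormula (Fin n) k :=
  BoundedFormula.iInf fun t : B => if t.1 ∈ T then t.1.eqTopFormula else ∼t.1.eqTopFormula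

theorem isQF_typeFormula {n k : ℕ} (B T : Finset (HeytingTerm (n + k))) :
    (typeFormula B T).IsQF := by
  refine BoundedFormula.isQF_iInf fun t => ?_
  split_ifs
  exacts [t.1.isQF_eqTopFormula, t.1.isQF_eqTopFormula.not]

theorem realize_typeFormula {n k : ℕ} {B T : Finset (HeytingTerm (n + k))} (hT : T ⊆ B)
    (a : Fin n → A) (x : Fin k → A) :
    (typeFormula B T).Realize a x ↔ typeOf B (Fin.append a x) = T := by
  rw [typeOf_eq_iff hT, typeFormula, BoundedFormula.realize_iInf, Subtype.forall]
  refine forall₂_congr fun t _ => ?_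
  split_ifs with htT <;> simp [htT]

end

section

variable {A : Type*} [HeytingAlgebra A]

theorem IsSimDegInvariant.exists_isQF {d n k : ℕ} {P : (Fin (n + k) → A) → Prop}
    (hP : IsSimDegInvariant d P) :
    ∃ χ : LHA.BoundedFormula (Fin n) k, χ.IsQF ∧ ∀ a x, χ.Realize a x ↔ P (Fin.append a x) := by
  obtain ⟨B, hB⟩ := HeytingTerm.exists_isDegreeBasis A (n + k) d
  obtain ⟨𝒯, h𝒯B, h𝒯⟩ := hP.exists_types hB
  refine ⟨BoundedFormula.iSup fun T : 𝒯 => typeFormula B T,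
    BoundedFormula.isQF_iSup fun T => isQF_typeFormula B T, fun a x => ?_⟩
  simp only [BoundedFormula.realize_iSup, realize_typeFormula (h𝒯B _ (Subtype.prop _)), h𝒯]
  exact ⟨fun ⟨T, hT⟩ => hT ▸ T.2, fun h => ⟨⟨_, h⟩, rfl⟩⟩

theorem FirstOrder.Language.BoundedFormula.IsQF.exists_isSimDegInvariant {n k : ℕ}
    {θ : LHA.BoundedFormula (Fin n) k} (hθ : θ.IsQF) :
    ∃ d, IsSimDegInvariant d fun v : Fin (n + k) → A =>
      θ.Realize (v ∘ Fin.castAdd k) (v ∘ Fin.natAdd n) := by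
  have split (v : Fin (n + k) → A) :
      Sum.elim (v ∘ Fin.castAdd k) (v ∘ Fin.natAdd n) = v ∘ finSumFinEquiv := by
    funext i
    cases i <;> rfl
  induction hθ with
  | falsum => exact ⟨0, fun _ _ _ => Iff.rfl⟩
  | of_isAtomic h =>
    obtain ⟨t₁, t₂⟩ | ⟨R, _⟩ := h
    · refine ⟨max (HeytingTerm.ofTerm finSumFinEquiv t₁).degree
        (HeytingTerm.ofTerm finSumFinEquiv t₂).degree + 1,
        fun v w hs => ?_⟩
      simp only [BoundedFormula.realize_bdEqual, split, ← HeytingTerm.eval_ofTerm]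
      exact hs.eval_eq_iff
    · exact R.elim
  | imp _ _ ih₁ ih₂ =>
    obtain ⟨d₁, hd₁⟩ := ih₁
    obtain ⟨d₂, hd₂⟩ := ih₂
    refine ⟨max d₁ d₂, fun v w hs => ?_⟩
    exact imp_congr (hd₁ v w (hs.mono (le_max_left _ _))) (hd₂ v w (hs.mono (le_max_right _ _)))

theorem hIndex_lt_top_iff {l d : ℕ} : hIndex A l d < ⊤ ↔ ∃ n, IndexProp A l d n := by
  constructor
  · contrapose!
    intro h
    refine top_le_iff.mpr (sInf_eq_top.mpr ?_)
    rintro _ ⟨n, -, hn⟩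
    exact absurd hn (h n)
  · rintro ⟨n, hn⟩
    exact (sInf_le ⟨n, rfl, hn⟩ : hIndex A l d ≤ n).trans_lt (ENat.natCast_lt_top n)

open Classical HeytingTerm in
theorem hasSolution_listInf_iff_exists_typeOf_eq {l m : ℕ} {B T : Finset (HeytingTerm (l + m))}
    (hT : T ⊆ B) (a : Fin l → A) :
    HasSolution (listInf T.toList) (fun k => ((B \ T).equivFin.symm k : HeytingTerm (l + m))) a ↔
      ∃ b, typeOf B (Fin.append a b) = T := by
  refine exists_congr fun b => ?_
  have henum :
      (∀ k, ((B \ T).equivFin.symm k : HeytingTerm (l + m)).eval (Fin.append a b) ≠ ⊤) ↔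
        ∀ t ∈ B \ T, t.eval (Fin.append a b) ≠ ⊤ :=
    ((B \ T).equivFin.symm.forall_congr_right (q := fun t : ↥(B \ T) =>
      (t : HeytingTerm (l + m)).eval (Fin.append a b) ≠ ⊤)).trans Subtype.forall
  rw [IsSolution, typeOf_eq_iff hT, eval_listInf_eq_top, henum]
  simp only [Finset.mem_toList, Finset.mem_sdiff]
  constructor
  · rintro ⟨hTtop, hBT⟩ t htB
    exact ⟨fun htop => by_contra fun htT => hBT t ⟨htB, htT⟩ htop, hTtop t⟩
  · intro h
    exact ⟨fun t htT => (h t (hT htT)).mpr htT, fun t ⟨htB, htT⟩ htop => htT ((h t htB).mp htop)⟩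

theorem HasQEProp.exists_isSimDegInvariant_exists_append (hQE : HasQEProp A) {M d : ℕ}
    {Q : (Fin (M + 1) → A) → Prop} (hQ : IsSimDegInvariant d Q) :
    ∃ n, IsSimDegInvariant n fun c : Fin M → A => ∃ b : Fin 1 → A, Q (Fin.append c b) := by
  classical
  obtain ⟨n, hn⟩ := hIndex_lt_top_iff.mp (hQE M d)
  obtain ⟨B, hB⟩ := HeytingTerm.exists_isDegreeBasis A (M + 1) d
  obtain ⟨𝒯, h𝒯B, h𝒯⟩ := hQ.exists_types hB
  have hQ𝒯 (c : Fin M → A) : (∃ b, Q (Fin.append c b)) ↔ ∃ T ∈ 𝒯,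
      HasSolution (HeytingTerm.listInf T.toList)
        (fun k => ((B \ T).equivFin.symm k : HeytingTerm (M + 1))) c := by
    simp only [h𝒯]
    constructor
    · rintro ⟨b, hb⟩
      exact ⟨_, hb, (hasSolution_listInf_iff_exists_typeOf_eq (h𝒯B _ hb) c).mpr ⟨b, rfl⟩⟩
    · rintro ⟨T, hT, hsol⟩
      obtain ⟨b, hb⟩ := (hasSolution_listInf_iff_exists_typeOf_eq (h𝒯B T hT) c).mp hsol
      exact ⟨b, hb ▸ hT⟩
  refine ⟨n, fun c c' hs => (hQ𝒯 c).trans (Iff.trans ?_ (hQ𝒯 c').symm)⟩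
  refine exists_congr fun T => and_congr_right fun hT => hn c c' hs _ _ _ ?_ fun k => hB.1 _ ?_
  · exact HeytingTerm.degree_listInf_le fun t ht => hB.1 t (h𝒯B T hT (Finset.mem_toList.mp ht))
  · exact (Finset.mem_sdiff.mp ((B \ T).equivFin.symm k).2).1

theorem HasQEProp.exists_isQF_realize_ex_iff (hQE : HasQEProp A) {n k : ℕ}
    {θ : LHA.BoundedFormula (Fin n) (k + 1)} (hθ : θ.IsQF) :
    ∃ χ : LHA.BoundedFormula (Fin n) k, χ.IsQF ∧
      ∀ (a : Fin n → A) (x : Fin k → A), χ.Realize a x ↔ θ.ex.Realize a x := by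
  obtain ⟨d, hd⟩ := hθ.exists_isSimDegInvariant (A := A)
  obtain ⟨d', hd'⟩ := hQE.exists_isSimDegInvariant_exists_append hd
  obtain ⟨χ, hχ, hχr⟩ := hd'.exists_isQF (n := n) (k := k)
  refine ⟨χ, hχ, fun a x => ?_⟩
  simp only [hχr, BoundedFormula.realize_ex, Fin.append_append_eq_append_snoc, Function.comp_def,
    Fin.append_left, Fin.append_right]
  exact ⟨fun ⟨b, hb⟩ => ⟨b 0, hb⟩, fun ⟨b, hb⟩ => ⟨fun _ => b, hb⟩⟩

theorem HasQEProp.exists_isQF_realize_iff (hQE : HasQEProp A) {n k : ℕ}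
    (φ : LHA.BoundedFormula (Fin n) k) :
    ∃ ψ : LHA.BoundedFormula (Fin n) k, ψ.IsQF ∧
      ∀ (a : Fin n → A) (x : Fin k → A), φ.Realize a x ↔ ψ.Realize a x := by
  induction φ with
  | falsum => exact ⟨⊥, BoundedFormula.isQF_bot, fun _ _ => Iff.rfl⟩
  | equal t₁ t₂ => exact ⟨_, (BoundedFormula.IsAtomic.equal t₁ t₂).isQF, fun _ _ => Iff.rfl⟩
  | rel R _ => exact R.elim
  | imp _ _ ih₁ ih₂ =>
    obtain ⟨ψ₁, hψ₁, h₁⟩ := ih₁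
    obtain ⟨ψ₂, hψ₂, h₂⟩ := ih₂
    exact ⟨ψ₁.imp ψ₂, hψ₁.imp hψ₂, fun a x => imp_congr (h₁ a x) (h₂ a x)⟩
  | all _ ih =>
    obtain ⟨ψ, hψ, h⟩ := ih
    obtain ⟨χ, hχ, hχr⟩ := hQE.exists_isQF_realize_ex_iff hψ.not
    refine ⟨∼χ, hχ.not, fun a x => ?_⟩
    simp only [BoundedFormula.realize_all, BoundedFormula.realize_not, hχr,
      BoundedFormula.realize_ex, h, not_exists, not_not]

noncomputable def solutionFormula {l κ : ℕ} (t : HeytingTerm (l + 1))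
    (s : Fin κ → HeytingTerm (l + 1)) : LHA.Formula (Fin l) :=
  ∃' (t.eqTopFormula ⊓ BoundedFormula.iInf fun k => ∼(s k).eqTopFormula)

theorem realize_solutionFormula {l κ : ℕ} (t : HeytingTerm (l + 1))
    (s : Fin κ → HeytingTerm (l + 1)) (a : Fin l → A) :
    (solutionFormula t s).Realize a ↔ HasSolution t s a := by
  simp only [solutionFormula, Formula.Realize, BoundedFormula.realize_ex,
    BoundedFormula.realize_inf, HeytingTerm.realize_eqTopFormula, BoundedFormula.realize_iInf,
    BoundedFormula.realize_not, HasSolution, IsSolution]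
  refine ⟨fun ⟨b, hb⟩ => ⟨_, hb⟩, fun ⟨b, hb⟩ => ⟨b 0, ?_⟩⟩
  rwa [show Fin.snoc (default : Fin 0 → A) (b 0) = b from funext fun i => by
    rw [Fin.fin_one_eq_zero i]; rfl]

variable (A) in
def solvabilityPredicates (l d : ℕ) : Set ((Fin l → A) → Prop) :=
  {P | ∃ (κ : ℕ) (t : HeytingTerm (l + 1)) (s : Fin κ → HeytingTerm (l + 1)),
    t.degree ≤ d ∧ (∀ k, (s k).degree ≤ d) ∧ HasSolution t s = P}

variable (A) in
theorem finite_solvabilityPredicates (l d : ℕ) : (solvabilityPredicates A l d).Finite := by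
  let F (f : (Fin (l + 1) → A) → A) (S : Set ((Fin (l + 1) → A) → A)) (a : Fin l → A) : Prop :=
    ∃ b : Fin 1 → A, f (Fin.append a b) = ⊤ ∧ ∀ g ∈ S, g (Fin.append a b) ≠ ⊤
  have hfin := HeytingTerm.finite_termFunctions A (l + 1) d
  refine (hfin.image2 F hfin.finite_subsets).subset ?_
  rintro _ ⟨κ, t, s, ht, hs, rfl⟩
  refine ⟨_, ⟨t, ht, rfl⟩, range fun k v => (s k).eval v,
    range_subset_iff.mpr fun k => ⟨s k, hs k, rfl⟩, ?_⟩
  funext a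
  simp only [F, HasSolution, IsSolution, forall_mem_range]

theorem exists_indexProp_of_forall_exists_isQF
    (hqe : ∀ (n : ℕ) (φ : LHA.Formula (Fin n)), ∃ ψ : LHA.Formula (Fin n),
      ψ.IsQF ∧ ∀ a : Fin n → A, φ.Realize a ↔ ψ.Realize a) (l d : ℕ) :
    ∃ n, IndexProp A l d n := by
  have hinv : ∀ P ∈ solvabilityPredicates A l d, ∀ᶠ n in Filter.atTop, IsSimDegInvariant n P := by
    rintro _ ⟨κ, t, s, -, -, rfl⟩
    obtain ⟨ψ, hψ, hψr⟩ := hqe l (solutionFormula t s)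
    obtain ⟨n, hn⟩ := hψ.exists_isSimDegInvariant (A := A)
    refine Filter.eventually_atTop.mpr ⟨n, fun n' hn' a a' hs => ?_⟩
    have hreal (c : Fin l → A) : HasSolution t s c ↔
        BoundedFormula.Realize ψ (c ∘ Fin.castAdd 0) (c ∘ Fin.natAdd l) := by
      rw [← realize_solutionFormula, hψr]
      exact iff_of_eq (congrArg (BoundedFormula.Realize ψ c) (Subsingleton.elim _ _))
    rw [hreal, hreal]
    exact hn.mono hn' a a' hs
  obtain ⟨n, hn⟩ :=
    ((Filter.eventually_all_finite (finite_solvabilityPredicates A l d)).mpr hinv).exists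
  exact ⟨n, fun a a' hs κ t s ht hs' => hn _ ⟨κ, t, s, ht, hs', rfl⟩ a a' hs⟩

end

/-- A Heyting algebra has the QE property iff its complete theory eliminates quantifiers:
every formula is equivalent in `A` to a quantifier-free formula. -/
theorem hasQEProp_iff_quantifier_elimination (A : Type*) [HeytingAlgebra A] :
    HasQEProp A ↔
      ∀ (n : ℕ) (φ : LHA.Formula (Fin n)), ∃ ψ : LHA.Formula (Fin n),
        ψ.IsQF ∧ ∀ a : Fin n → A, φ.Realize a ↔ ψ.Realize a := by
  constructor
  · intro hQE n φ
    obtain ⟨ψ, hψ, hφψ⟩ := HasQEProp.exists_isQF_realize_iff hQE φ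
    exact ⟨ψ, hψ, fun a => hφψ a default⟩
  · exact fun hqe l d => hIndex_lt_top_iff.mpr (exists_indexProp_of_forall_exists_isQF hqe l d)
end

section
/- (Finite Model Property for systems) Let t, s₁, …, s_κ be Heyting terms in m variables. If there exist a Heyting algebra K and a tuple b̄ ∈ K^m with t(b̄) = ⊤ and s_k(b̄) ≠ ⊤ for every 1 ≤ k ≤ κ, then there exist a finite Heyting algebra K′ and a tuple b̄′ ∈ K′^m with t(b̄′) = ⊤ and s_k(b̄′) ≠ ⊤ for every 1 ≤ k ≤ κ. -/
open Function Set

theorem exists_orderIso_heytingAlgebra_of_finite (L : Type*) [DistribLattice L] [OrderBot L]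
    [Finite L] : ∃ (A : Type) (_ : HeytingAlgebra A), Nonempty (L ≃o A) := by
  classical
  have := Fintype.ofFinite L
  exact ⟨LowerSet (Shrink.{0} {a : L // SupIrred a}), inferInstance,
    ⟨OrderIso.lowerSetSupIrred.trans (LowerSet.map (orderIsoShrink _))⟩⟩

theorem exists_heytingAlgebra_boundedLatticeHom_of_finite {K : Type*} [DistribLattice K]
    [BoundedOrder K] {S : Set K} (hS : S.Finite) :
    ∃ (A : Type) (_ : HeytingAlgebra A) (f : BoundedLatticeHom A K),
      Finite A ∧ Injective f ∧ S ⊆ range f := by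
  set T := latticeClosure (insert ⊥ (insert ⊤ S))
  have hsup : ∀ ⦃x y⦄, x ∈ T → y ∈ T → x ⊔ y ∈ T := fun _ _ hx hy =>
    isSublattice_latticeClosure.supClosed hx hy
  have hinf : ∀ ⦃x y⦄, x ∈ T → y ∈ T → x ⊓ y ∈ T := fun _ _ hx hy =>
    isSublattice_latticeClosure.infClosed hx hy
  have hbot : ⊥ ∈ T := subset_latticeClosure (mem_insert _ _)
  have htop : ⊤ ∈ T := subset_latticeClosure (mem_insert_of_mem _ (mem_insert _ _))
  let := Subtype.distribLattice (P := (· ∈ T)) hsup hinf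
  let := Subtype.boundedOrder hbot htop
  have : Finite T := ((hS.insert _).insert _).latticeClosure.to_subtype
  obtain ⟨A, _, ⟨e⟩⟩ := exists_orderIso_heytingAlgebra_of_finite T
  refine ⟨A, inferInstance, (BoundedLatticeHom.subtypeVal hbot htop hsup hinf).comp e.symm,
    .of_equiv T e.toEquiv, Subtype.val_injective.comp e.symm.injective, fun x hx => ?_⟩
  exact ⟨e ⟨x, subset_latticeClosure (mem_insert_of_mem _ (mem_insert_of_mem _ hx))⟩, by simp⟩

theorem le_of_map_le_of_injective {F α β : Type*} [SemilatticeInf α] [SemilatticeInf β]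
    [FunLike F α β] [InfHomClass F α β] {f : F} (hf : Injective f) {a b : α} (h : f a ≤ f b) :
    a ≤ b :=
  inf_eq_left.1 <| hf <| by rw [map_inf, inf_eq_left.2 h]

/-- An injective `⊓`-homomorphism need not preserve `⇨`, but it does so at `a, b` as soon as
`f a ⇨ f b` has a preimage: that preimage is then the relative pseudocomplement in `α`. -/
theorem map_himp_of_himp_mem_range {F α β : Type*} [HeytingAlgebra α] [HeytingAlgebra β]
    [FunLike F α β] [InfHomClass F α β] {f : F} (hf : Injective f) {a b : α}
    (h : f a ⇨ f b ∈ range f) : f (a ⇨ b) = f a ⇨ f b := by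
  obtain ⟨c, hc⟩ := h
  refine le_antisymm (le_himp_iff.2 ?_) (hc ▸ OrderHomClass.mono f ?_)
  · rw [← map_inf]
    exact OrderHomClass.mono f himp_inf_le
  · refine le_himp_iff.2 (le_of_map_le_of_injective hf ?_)
    rw [map_inf, hc]
    exact himp_inf_le

namespace HeytingTerm

def subterms {n : ℕ} : HeytingTerm n → List (HeytingTerm n)
  | .var i => [.var i]
  | .bot => [.bot]
  | .top => [.top]
  | .inf a b => .inf a b :: (a.subterms ++ b.subterms)
  | .sup a b => .sup a b :: (a.subterms ++ b.subterms)
  | .himp a b => .himp a b :: (a.subterms ++ b.subterms)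

theorem map_eval_of_subterms_mem_range {n : ℕ} {F α β : Type*} [HeytingAlgebra α]
    [HeytingAlgebra β] [FunLike F α β] [BoundedLatticeHomClass F α β] {f : F} (hf : Injective f)
    (v : Fin n → α) {u : HeytingTerm n} (hu : ∀ w ∈ u.subterms, w.eval (f ∘ v) ∈ range f) :
    f (u.eval v) = u.eval (f ∘ v) := by
  induction u with
  | var i => rfl
  | bot => exact map_bot f
  | top => exact map_top f
  | inf a c iha ihc =>
    simp only [subterms, List.forall_mem_cons, List.forall_mem_append] at hu
    simp only [eval, map_inf, iha hu.2.1, ihc hu.2.2]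
  | sup a c iha ihc =>
    simp only [subterms, List.forall_mem_cons, List.forall_mem_append] at hu
    simp only [eval, map_sup, iha hu.2.1, ihc hu.2.2]
  | himp a c iha ihc =>
    simp only [subterms, List.forall_mem_cons, List.forall_mem_append] at hu
    simp only [eval, ← iha hu.2.1, ← ihc hu.2.2] at hu ⊢
    exact map_himp_of_himp_mem_range hf hu.1

end HeytingTerm

/-- Finite Model Property for systems of equations and negated equations. -/
theorem finite_model_property {m κ : ℕ} (t : HeytingTerm m) (s : Fin κ → HeytingTerm m)
    (K : Type*) [HeytingAlgebra K] (b : Fin m → K)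
    (ht : t.eval b = ⊤) (hs : ∀ k, (s k).eval b ≠ ⊤) :
    ∃ (K' : Type) (inst : HeytingAlgebra K'),
      letI := inst
      Finite K' ∧ ∃ b' : Fin m → K', t.eval b' = ⊤ ∧ ∀ k, (s k).eval b' ≠ ⊤ := by
  set terms := (t :: List.ofFn s).flatMap HeytingTerm.subterms
  obtain ⟨A, _, f, hA, hf, hS⟩ := exists_heytingAlgebra_boundedLatticeHom_of_finite
    ((finite_range b).union (terms.map (HeytingTerm.eval b)).finite_toSet)
  choose b' hb' using fun i => hS (Or.inl (mem_range_self i))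
  have hfb : f ∘ b' = b := funext hb'
  have eval_eq_top_iff : ∀ u ∈ t :: List.ofFn s, u.eval b' = ⊤ ↔ u.eval b = ⊤ := by
    intro u hu
    have hsub : ∀ w ∈ u.subterms, w.eval (f ∘ b') ∈ range f := by
      rw [hfb]
      exact fun w hw => hS (Or.inr (List.mem_map_of_mem (List.mem_flatMap.2 ⟨u, hu, hw⟩)))
    rw [← hf.eq_iff, map_top, HeytingTerm.map_eval_of_subterms_mem_range hf b' hsub, hfb]
  exact ⟨A, inferInstance, hA, b', (eval_eq_top_iff t (by simp)).2 ht,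
    fun k => (eval_eq_top_iff (s k) (by simp)).not.2 (hs k)⟩
end
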